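/- arXiv:1512.08602 — 6 statements merged into one kernel-verified Lean document; each statement's English description precedes it below -/
import Mathlib

section
/- Let d, n be positive integers, let p ≥ 2 be a real number, and let v₁, …, vₙ ∈ ℝ^d be points with ‖vᵢ‖_p ≤ 1 for all i. Let u be a point in the convex hull of {v₁, …, vₙ}, and let ε > 0. Then for every integer k with k ≥ 4(p−1)/ε² there exists a function i : {1,…,k} → {1,…,n} (a multiset of k of the points, repetitions allowed) such that ‖(1/k)·Σ_{t=1}^{k} v_{i(t)} − u‖_p ≤ ε. -/
open Finset

/-- The ℓ_p norm of a finite-dimensional real vector, for real `p ≥ 1`. -/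
noncomputable def lpNorm {ι : Type*} [Fintype ι] (p : ℝ) (x : ι → ℝ) : ℝ :=
  (∑ j, |x j| ^ p) ^ (1 / p)

/-!
Maurey's empirical method, derandomised. For `p ≥ 2` the ℓ_p norm satisfies
`‖x + y‖² + ‖x - y‖² ≤ 2‖x‖² + 2(p - 1)‖y‖²`. In any normed space with this two-point
inequality (constant `C`), if `u = ∑ wⱼ vⱼ` is a convex combination of vectors of norm at most 1,
then for every `s` the `w`-average of `‖s + vⱼ - u‖²` is at most `‖s‖² + 4C`: write
`s + vⱼ - u` as the `w`-average of the `s + vⱼ - vₗ`, apply Jensen, and pair the terms `(j, l)`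
and `(l, j)`. So the points can be chosen one at a time keeping `‖∑ₜ (v (i t) - u)‖² ≤ 4Ck`, and
dividing by `k` gives the bound.

The two-point inequality for ℓ_p follows coordinatewise from
`|a + b|^p + |a - b|^p ≤ 2 (a² + (p - 1) b²)^(p/2)`, summed up with the concavity of `x ↦ x^(2/p)`
and Minkowski's inequality in ℓ_{p/2}. The scalar inequality climbs from the power-mean
inequality for exponents in `[0, 2]` in steps of two, each step comparing derivatives twice.
-/

open Set Real

section WeightedSums

variable {ι : Type*} [Fintype ι] {w : ι → ℝ}

lemma exists_le_of_sum_mul_le (hw₀ : ∀ i, 0 ≤ w i) (hw₁ : ∑ i, w i = 1) {f : ι → ℝ} {B : ℝ}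
    (h : ∑ i, w i * f i ≤ B) : ∃ i, f i ≤ B := by
  by_contra! hlt
  obtain ⟨i, -, hi⟩ := exists_lt_of_sum_lt (s := univ) (f := 0) (g := w) (by simp [hw₁])
  have : ∑ i, w i * B < ∑ i, w i * f i :=
    sum_lt_sum (fun j _ => mul_le_mul_of_nonneg_left (hlt j).le (hw₀ j))
      ⟨i, mem_univ _, mul_lt_mul_of_pos_left (hlt i) hi⟩
  rw [← sum_mul, hw₁, one_mul] at this
  linarith

lemma sum_mul_sum_mul_le_of_add_swap_le (hw₀ : ∀ i, 0 ≤ w i) (hw₁ : ∑ i, w i = 1)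
    {F : ι → ι → ℝ} {B : ℝ} (hF : ∀ i j, F i j + F j i ≤ 2 * B) :
    ∑ i, w i * ∑ j, w j * F i j ≤ B := by
  have hswap : ∑ i, w i * ∑ j, w j * F i j = ∑ i, w i * ∑ j, w j * F j i := by
    simp_rw [mul_sum]
    rw [sum_comm]
    exact sum_congr rfl fun i _ => sum_congr rfl fun j _ => by ring
  have hsum : ∑ i, w i * ∑ j, w j * (F i j + F j i) ≤ ∑ i, w i * ∑ j, w j * (2 * B) :=
    sum_le_sum fun i _ => mul_le_mul_of_nonneg_left
      (sum_le_sum fun j _ => mul_le_mul_of_nonneg_left (hF i j) (hw₀ j)) (hw₀ i)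
  simp only [mul_add, sum_add_distrib, ← sum_mul, hw₁, one_mul, ← hswap] at hsum
  linarith

end WeightedSums

lemma exists_sum_smul_eq_of_mem_convexHull_range {ι E : Type*} [Fintype ι] [AddCommGroup E]
    [Module ℝ E] {v : ι → E} {u : E} (hu : u ∈ convexHull ℝ (range v)) :
    ∃ w : ι → ℝ, (∀ i, 0 ≤ w i) ∧ ∑ i, w i = 1 ∧ ∑ i, w i • v i = u := by
  classical
  rw [convexHull_range_eq_exists_affineCombination] at hu
  obtain ⟨s, w, hw₀, hw₁, rfl⟩ := hu
  refine ⟨fun i => if i ∈ s then w i else 0, fun i => ?_, ?_, ?_⟩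
  · dsimp only
    split_ifs with h
    exacts [hw₀ i h, le_rfl]
  · rwa [sum_ite_mem, Finset.univ_inter]
  · simp only [ite_smul, zero_smul, sum_ite_mem, Finset.univ_inter]
    rw [affineCombination_eq_linear_combination s v w hw₁]

section SmoothNormedSpace

variable {E : Type*} [NormedAddCommGroup E] [NormedSpace ℝ E] {ι : Type*} [Fintype ι] {C : ℝ}

lemma norm_sum_smul_sq_le {w : ι → ℝ} (hw₀ : ∀ i, 0 ≤ w i) (hw₁ : ∑ i, w i = 1) (z : ι → E) :
    ‖∑ i, w i • z i‖ ^ 2 ≤ ∑ i, w i * ‖z i‖ ^ 2 := by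
  simpa using ((convexOn_norm convex_univ).pow (fun _ _ => norm_nonneg _) 2).map_sum_le
    (t := univ) (fun i _ => hw₀ i) hw₁ (fun i _ => mem_univ (z i))

lemma sum_mul_norm_add_sub_sq_le
    (hE : ∀ x y : E, ‖x + y‖ ^ 2 + ‖x - y‖ ^ 2 ≤ 2 * ‖x‖ ^ 2 + 2 * C * ‖y‖ ^ 2) (hC : 0 ≤ C)
    {v : ι → E} (hv : ∀ i, ‖v i‖ ≤ 1) {w : ι → ℝ} (hw₀ : ∀ i, 0 ≤ w i) (hw₁ : ∑ i, w i = 1)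
    {u : E} (hu : ∑ i, w i • v i = u) (s : E) :
    ∑ i, w i * ‖s + (v i - u)‖ ^ 2 ≤ ‖s‖ ^ 2 + 4 * C := by
  have hjensen : ∀ i, ‖s + (v i - u)‖ ^ 2 ≤ ∑ j, w j * ‖s + (v i - v j)‖ ^ 2 := fun i => by
    have hrep : s + (v i - u) = ∑ j, w j • (s + (v i - v j)) := by
      simp only [smul_add, smul_sub, sum_add_distrib, sum_sub_distrib, ← sum_smul, hw₁, one_smul,
        hu]
    rw [hrep]
    exact norm_sum_smul_sq_le hw₀ hw₁ _
  have hpair : ∀ i j, ‖s + (v i - v j)‖ ^ 2 + ‖s + (v j - v i)‖ ^ 2 ≤ 2 * (‖s‖ ^ 2 + 4 * C) :=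
    fun i j => by
    have hdiam : ‖v i - v j‖ ^ 2 ≤ 2 ^ 2 := pow_le_pow_left₀ (norm_nonneg _)
      ((norm_sub_le _ _).trans (by linarith [hv i, hv j])) 2
    rw [show s + (v j - v i) = s - (v i - v j) by abel]
    nlinarith [hE s (v i - v j)]
  calc ∑ i, w i * ‖s + (v i - u)‖ ^ 2
      ≤ ∑ i, w i * ∑ j, w j * ‖s + (v i - v j)‖ ^ 2 :=
        sum_le_sum fun i _ => mul_le_mul_of_nonneg_left (hjensen i) (hw₀ i)
    _ ≤ ‖s‖ ^ 2 + 4 * C := sum_mul_sum_mul_le_of_add_swap_le hw₀ hw₁ hpair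

lemma exists_norm_sum_sub_sq_le
    (hE : ∀ x y : E, ‖x + y‖ ^ 2 + ‖x - y‖ ^ 2 ≤ 2 * ‖x‖ ^ 2 + 2 * C * ‖y‖ ^ 2) (hC : 0 ≤ C)
    {v : ι → E} (hv : ∀ i, ‖v i‖ ≤ 1) {u : E} (hu : u ∈ convexHull ℝ (range v)) (k : ℕ) :
    ∃ i : Fin k → ι, ‖∑ t, (v (i t) - u)‖ ^ 2 ≤ 4 * C * k := by
  obtain ⟨w, hw₀, hw₁, hwu⟩ := exists_sum_smul_eq_of_mem_convexHull_range hu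
  induction k with
  | zero => exact ⟨Fin.elim0, by simp⟩
  | succ k ih =>
    obtain ⟨i, hi⟩ := ih
    obtain ⟨j, hj⟩ := exists_le_of_sum_mul_le hw₀ hw₁
      (sum_mul_norm_add_sub_sq_le hE hC hv hw₀ hw₁ hwu (∑ t, (v (i t) - u)))
    refine ⟨Fin.snoc i j, ?_⟩
    simp only [Fin.sum_univ_castSucc, Fin.snoc_castSucc, Fin.snoc_last]
    push_cast
    linarith

theorem exists_norm_inv_smul_sum_sub_le
    (hE : ∀ x y : E, ‖x + y‖ ^ 2 + ‖x - y‖ ^ 2 ≤ 2 * ‖x‖ ^ 2 + 2 * C * ‖y‖ ^ 2) (hC : 0 < C)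
    {v : ι → E} (hv : ∀ i, ‖v i‖ ≤ 1) {u : E} (hu : u ∈ convexHull ℝ (range v))
    {ε : ℝ} (hε : 0 < ε) {k : ℕ} (hk : 4 * C / ε ^ 2 ≤ k) :
    ∃ i : Fin k → ι, ‖(k : ℝ)⁻¹ • ∑ t, v (i t) - u‖ ≤ ε := by
  obtain ⟨i, hi⟩ := exists_norm_sum_sub_sq_le hE hC.le hv hu k
  have hk₀ : 0 < (k : ℝ) := (div_pos (by positivity) (by positivity)).trans_le hk
  have hk' : 4 * C ≤ k * ε ^ 2 := (div_le_iff₀ (by positivity)).mp hk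
  refine ⟨i, ?_⟩
  have hmean : (k : ℝ)⁻¹ • ∑ t, v (i t) - u = (k : ℝ)⁻¹ • ∑ t, (v (i t) - u) := by
    rw [sum_sub_distrib, smul_sub, sum_const, card_univ, Fintype.card_fin,
      ← Nat.cast_smul_eq_nsmul ℝ, inv_smul_smul₀ hk₀.ne']
  rw [hmean, norm_smul, norm_inv, Real.norm_natCast, inv_mul_le_iff₀ hk₀,
    ← pow_le_pow_iff_left₀ (norm_nonneg _) (by positivity) two_ne_zero]
  nlinarith

end SmoothNormedSpace

lemma rpow_add_rpow_le_two_mul_half_add_rpow {r : ℝ} (hr₀ : 0 ≤ r) (hr₁ : r ≤ 1) {A B : ℝ}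
    (hA : 0 ≤ A) (hB : 0 ≤ B) : A ^ r + B ^ r ≤ 2 * ((A + B) / 2) ^ r := by
  have := (concaveOn_rpow hr₀ hr₁).2 (mem_Ici.mpr hA) (mem_Ici.mpr hB)
    (by norm_num : (0 : ℝ) ≤ 1 / 2) (by norm_num : (0 : ℝ) ≤ 1 / 2) (by norm_num)
  simp only [smul_eq_mul] at this
  rw [show (1 / 2 : ℝ) * A + 1 / 2 * B = (A + B) / 2 by ring] at this
  linarith

/-- The scalar two-point inequality `|a + b|^q + |a - b|^q ≤ 2 (a² + c b²)^(q/2)`, normalised to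
`a = 1`, `b = t ∈ [0, 1]`. -/
def TwoPointBound (q c : ℝ) : Prop :=
  ∀ t ∈ Icc (0 : ℝ) 1, (1 + t) ^ q + (1 - t) ^ q ≤ 2 * (1 + c * t ^ 2) ^ (q / 2)

lemma TwoPointBound.mono {q c c' : ℝ} (h : TwoPointBound q c) (hq : 0 ≤ q) (hc : 0 ≤ c)
    (hcc' : c ≤ c') : TwoPointBound q c' := fun t ht =>
  (h t ht).trans <| by gcongr

lemma twoPointBound_one_of_le_two {q : ℝ} (hq₀ : 0 ≤ q) (hq₂ : q ≤ 2) : TwoPointBound q 1 := by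
  intro t ⟨ht₀, ht₁⟩
  have hsq : ∀ x : ℝ, 0 ≤ x → (x ^ 2) ^ (q / 2) = x ^ q := fun x hx => by
    rw [← rpow_natCast, ← rpow_mul hx]
    ring_nf
  have := rpow_add_rpow_le_two_mul_half_add_rpow (div_nonneg hq₀ zero_le_two)
    (by linarith : q / 2 ≤ 1) (sq_nonneg (1 + t)) (sq_nonneg (1 - t))
  rwa [hsq _ (by linarith), hsq _ (by linarith),
    show ((1 + t) ^ 2 + (1 - t) ^ 2) / 2 = 1 + 1 * t ^ 2 by ring] at this

lemma hasDerivAt_one_add_rpow (q : ℝ) {t : ℝ} (ht : 0 < 1 + t) :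
    HasDerivAt (fun t => (1 + t) ^ q) (q * (1 + t) ^ (q - 1)) t := by
  simpa using ((hasDerivAt_id t).const_add 1).rpow_const (p := q) (Or.inl ht.ne')

lemma hasDerivAt_one_sub_rpow (q : ℝ) {t : ℝ} (ht : 0 < 1 - t) :
    HasDerivAt (fun t => (1 - t) ^ q) (-(q * (1 - t) ^ (q - 1))) t := by
  simpa using ((hasDerivAt_id t).const_sub 1).rpow_const (p := q) (Or.inl ht.ne')

lemma hasDerivAt_one_add_mul_sq_rpow (c e : ℝ) {t : ℝ} (ht : 0 < 1 + c * t ^ 2) :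
    HasDerivAt (fun t => (1 + c * t ^ 2) ^ e) (2 * c * t * e * (1 + c * t ^ 2) ^ (e - 1)) t := by
  convert (((hasDerivAt_pow 2 t).const_mul c).const_add 1).rpow_const (p := e) (Or.inl ht.ne')
    using 1
  ring

/- The derivative of `(1 + t)^(q+2) + (1 - t)^(q+2)` is `q + 2` times the odd part bounded
here, whose derivative is `q + 1` times the left side of `TwoPointBound q c`. -/
lemma one_add_rpow_sub_one_sub_rpow_le {q c : ℝ} (h : TwoPointBound q c) (hq : 0 ≤ q)
    (hc : q + 1 ≤ c) : ∀ t ∈ Icc (0 : ℝ) 1,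
      (1 + t) ^ (q + 1) - (1 - t) ^ (q + 1) ≤ 2 * c * t * (1 + c * t ^ 2) ^ (q / 2) := by
  have hc₀ : 0 ≤ c := by linarith
  refine image_le_of_deriv_right_le_deriv_boundary
    (f' := fun t => (q + 1) * ((1 + t) ^ q + (1 - t) ^ q))
    (B' := fun t => 2 * c * (1 + c * t ^ 2) ^ (q / 2)
      + 2 * c * t * (2 * c * t * (q / 2) * (1 + c * t ^ 2) ^ (q / 2 - 1)))
    (by fun_prop (disch := first | positivity | linarith)) (fun t ht => ?_) (by simp)
    (by fun_prop (disch := positivity)) (fun t ht => ?_) (fun t ht => ?_)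
  all_goals obtain ⟨ht₀, ht₁⟩ := ht
  · refine ((hasDerivAt_one_add_rpow _ (by linarith)).sub
      (hasDerivAt_one_sub_rpow _ (by linarith))).hasDerivWithinAt.congr_deriv ?_
    rw [add_sub_cancel_right]
    ring
  · refine (((hasDerivAt_id t).const_mul (2 * c)).mul
      (hasDerivAt_one_add_mul_sq_rpow c (q / 2) (by positivity))).hasDerivWithinAt.congr_deriv ?_
    simp only [id]
    ring
  · have hbound := h t ⟨ht₀, ht₁.le⟩
    have : 0 ≤ 2 * c * t * (2 * c * t * (q / 2) * (1 + c * t ^ 2) ^ (q / 2 - 1)) := by positivity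
    have : 0 ≤ (1 + c * t ^ 2) ^ (q / 2) := by positivity
    nlinarith

lemma TwoPointBound.add_two {q c : ℝ} (h : TwoPointBound q c) (hq : 0 ≤ q) (hc : q + 1 ≤ c) :
    TwoPointBound (q + 2) c := by
  have hodd := one_add_rpow_sub_one_sub_rpow_le h hq hc
  have hc₀ : 0 ≤ c := by linarith
  intro t ht
  refine image_le_of_deriv_right_le_deriv_boundary
    (f := fun t => (1 + t) ^ (q + 2) + (1 - t) ^ (q + 2))
    (B := fun t => 2 * (1 + c * t ^ 2) ^ ((q + 2) / 2))
    (f' := fun t => (q + 2) * ((1 + t) ^ (q + 1) - (1 - t) ^ (q + 1)))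
    (B' := fun t => (q + 2) * (2 * c * t * (1 + c * t ^ 2) ^ (q / 2)))
    (by fun_prop (disch := first | positivity | linarith)) (fun t ht => ?_) (by norm_num)
    (by fun_prop (disch := positivity)) (fun t ht => ?_) (fun t ht => ?_) ht
  all_goals obtain ⟨ht₀, ht₁⟩ := ht
  · refine ((hasDerivAt_one_add_rpow _ (by linarith)).add
      (hasDerivAt_one_sub_rpow _ (by linarith))).hasDerivWithinAt.congr_deriv ?_
    rw [show q + 2 - 1 = q + 1 by ring]
    ring
  · refine ((hasDerivAt_one_add_mul_sq_rpow c ((q + 2) / 2) (by positivity)).const_mul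
      2).hasDerivWithinAt.congr_deriv ?_
    rw [show (q + 2) / 2 - 1 = q / 2 by ring]
    ring
  · exact mul_le_mul_of_nonneg_left (hodd t ⟨ht₀, ht₁.le⟩) (by linarith)

lemma twoPointBound_sub_one {p : ℝ} (hp : 2 ≤ p) : TwoPointBound p (p - 1) := by
  have hsmall : ∀ p : ℝ, 2 ≤ p → p ≤ 4 → TwoPointBound p (p - 1) := fun p hp hp₄ => by
    simpa using ((twoPointBound_one_of_le_two (q := p - 2) (by linarith) (by linarith)).mono
      (by linarith) zero_le_one (by linarith)).add_two (by linarith) (by linarith)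
  obtain ⟨N, hN⟩ : ∃ N : ℕ, p ≤ 2 * N + 4 := ⟨⌈p⌉₊, by linarith [Nat.le_ceil p]⟩
  induction N generalizing p with
  | zero => exact hsmall p hp (by simpa using hN)
  | succ N ih =>
    rcases le_or_gt p 4 with hp₄ | hp₄
    · exact hsmall p hp hp₄
    · have hprev := (ih (p := p - 2) (by linarith) (by push_cast at hN; linarith)).mono
        (by linarith) (by linarith) (show p - 2 - 1 ≤ p - 1 by linarith)
      simpa using hprev.add_two (by linarith) (by linarith)

lemma abs_add_rpow_add_abs_sub_rpow_le_of_le {p : ℝ} (hp : 2 ≤ p) {a b : ℝ} (hb : 0 ≤ b)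
    (hba : b ≤ a) : |a + b| ^ p + |a - b| ^ p ≤ 2 * (a ^ 2 + (p - 1) * b ^ 2) ^ (p / 2) := by
  obtain rfl | ha := (hb.trans hba).eq_or_lt
  · obtain rfl : b = 0 := le_antisymm hba hb
    simp [zero_rpow (by linarith : p ≠ 0), zero_rpow (by linarith : p / 2 ≠ 0)]
  set t := b / a
  have ht : t ∈ Icc (0 : ℝ) 1 := ⟨div_nonneg hb ha.le, (div_le_one ha).mpr hba⟩
  have hb' : b = a * t := (mul_div_cancel₀ b ha.ne').symm
  have hsq : (a ^ 2) ^ (p / 2) = a ^ p := by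
    rw [← rpow_natCast, ← rpow_mul ha.le]
    ring_nf
  rw [hb', show a + a * t = a * (1 + t) by ring, show a - a * t = a * (1 - t) by ring,
    abs_of_nonneg (by nlinarith [ht.1]), abs_of_nonneg (by nlinarith [ht.2]),
    show a ^ 2 + (p - 1) * (a * t) ^ 2 = a ^ 2 * (1 + (p - 1) * t ^ 2) by ring,
    mul_rpow ha.le (by linarith [ht.1]), mul_rpow ha.le (by linarith [ht.2]),
    mul_rpow (sq_nonneg a) (by nlinarith [ht.1]), hsq]
  have := mul_le_mul_of_nonneg_left (twoPointBound_sub_one hp t ht) (rpow_nonneg ha.le p)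
  linarith

lemma abs_add_rpow_add_abs_sub_rpow_le {p : ℝ} (hp : 2 ≤ p) (a b : ℝ) :
    |a + b| ^ p + |a - b| ^ p ≤ 2 * (a ^ 2 + (p - 1) * b ^ 2) ^ (p / 2) := by
  wlog hb : 0 ≤ b generalizing b
  · have := this (-b) (by linarith)
    rwa [← sub_eq_add_neg, sub_neg_eq_add, neg_sq, add_comm (|a - b| ^ p)] at this
  wlog ha : 0 ≤ a generalizing a
  · have := this (-a) (by linarith)
    rwa [neg_add_eq_sub, abs_sub_comm, ← neg_add', abs_neg, neg_sq,
      add_comm (|a - b| ^ p)] at this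
  rcases le_total b a with hba | hab
  · exact abs_add_rpow_add_abs_sub_rpow_le_of_le hp hb hba
  · calc |a + b| ^ p + |a - b| ^ p = |b + a| ^ p + |b - a| ^ p := by
          rw [add_comm b a, abs_sub_comm b a]
      _ ≤ 2 * (b ^ 2 + (p - 1) * a ^ 2) ^ (p / 2) :=
        abs_add_rpow_add_abs_sub_rpow_le_of_le hp ha hab
      _ ≤ 2 * (a ^ 2 + (p - 1) * b ^ 2) ^ (p / 2) := by
        have hsq := pow_le_pow_left₀ ha hab 2
        have hp₁ : 0 ≤ p - 1 := by linarith
        gcongr 2 * ?_ ^ _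
        nlinarith

section lpNorm

variable {ι : Type*} [Fintype ι] {p : ℝ}

lemma lpNorm_add_le (hp : 1 ≤ p) (x y : ι → ℝ) : lpNorm p (x + y) ≤ lpNorm p x + lpNorm p y :=
  Real.Lp_add_le univ x y hp

lemma lpNorm_smul (hp : 0 < p) (c : ℝ) (x : ι → ℝ) : lpNorm p (c • x) = |c| * lpNorm p x := by
  simp only [lpNorm, Pi.smul_apply, smul_eq_mul, abs_mul, mul_rpow (abs_nonneg c) (abs_nonneg _),
    ← mul_sum]
  rw [mul_rpow (by positivity) (by positivity), ← rpow_mul (abs_nonneg c),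
    mul_one_div_cancel hp.ne', rpow_one]

lemma lpNorm_sq (x : ι → ℝ) : lpNorm p x ^ 2 = (∑ j, |x j| ^ p) ^ (2 / p) := by
  rw [lpNorm, ← rpow_natCast, ← rpow_mul (by positivity)]
  ring_nf

lemma lpNorm_div_two_sq (x : ι → ℝ) :
    lpNorm (p / 2) (fun j => x j ^ 2) = lpNorm p x ^ 2 := by
  have hsq : ∀ j, |x j ^ 2| ^ (p / 2) = |x j| ^ p := fun j => by
    rw [abs_pow, ← rpow_natCast, ← rpow_mul (abs_nonneg _)]
    ring_nf
  rw [lpNorm_sq, lpNorm, one_div_div]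
  simp only [hsq]

lemma lpNorm_eq_norm_toLp (hp : 0 < p) (x : ι → ℝ) :
    lpNorm p x = ‖WithLp.toLp (ENNReal.ofReal p) x‖ := by
  rw [PiLp.norm_eq_sum (by rwa [ENNReal.toReal_ofReal hp.le]), ENNReal.toReal_ofReal hp.le]
  rfl

lemma lpNorm_add_sq_add_lpNorm_sub_sq_le (hp : 2 ≤ p) (x y : ι → ℝ) :
    lpNorm p (x + y) ^ 2 + lpNorm p (x - y) ^ 2
      ≤ 2 * lpNorm p x ^ 2 + 2 * (p - 1) * lpNorm p y ^ 2 := by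
  have hp₀ : 0 < p := by linarith
  set T : ι → ℝ := (fun j => x j ^ 2) + (p - 1) • fun j => y j ^ 2
  have hpointwise : ∑ j, |(x + y) j| ^ p + ∑ j, |(x - y) j| ^ p ≤ 2 * ∑ j, |T j| ^ (p / 2) := by
    rw [← sum_add_distrib, mul_sum]
    refine sum_le_sum fun j _ => ?_
    have hTj : T j = x j ^ 2 + (p - 1) * y j ^ 2 := rfl
    rw [hTj, abs_of_nonneg (a := x j ^ 2 + (p - 1) * y j ^ 2) (by nlinarith)]
    exact abs_add_rpow_add_abs_sub_rpow_le hp (x j) (y j)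
  have hminkowski : lpNorm (p / 2) T ≤ lpNorm p x ^ 2 + (p - 1) * lpNorm p y ^ 2 := by
    refine (lpNorm_add_le (by linarith) _ _).trans_eq ?_
    rw [lpNorm_smul (by linarith), lpNorm_div_two_sq, lpNorm_div_two_sq,
      abs_of_nonneg (by linarith)]
  calc lpNorm p (x + y) ^ 2 + lpNorm p (x - y) ^ 2
      = (∑ j, |(x + y) j| ^ p) ^ (2 / p) + (∑ j, |(x - y) j| ^ p) ^ (2 / p) := by
        rw [lpNorm_sq, lpNorm_sq]
    _ ≤ 2 * ((∑ j, |(x + y) j| ^ p + ∑ j, |(x - y) j| ^ p) / 2) ^ (2 / p) :=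
        rpow_add_rpow_le_two_mul_half_add_rpow (by positivity) ((div_le_one hp₀).mpr hp)
          (by positivity) (by positivity)
    _ ≤ 2 * (∑ j, |T j| ^ (p / 2)) ^ (2 / p) := by gcongr; linarith
    _ = 2 * lpNorm (p / 2) T := by rw [lpNorm, one_div_div]
    _ ≤ 2 * lpNorm p x ^ 2 + 2 * (p - 1) * lpNorm p y ^ 2 := by linarith

lemma PiLp.norm_add_sq_add_norm_sub_sq_le (hp : 2 ≤ p)
    (x y : PiLp (ENNReal.ofReal p) fun _ : ι => ℝ) :
    ‖x + y‖ ^ 2 + ‖x - y‖ ^ 2 ≤ 2 * ‖x‖ ^ 2 + 2 * (p - 1) * ‖y‖ ^ 2 := by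
  simpa only [lpNorm_eq_norm_toLp (by linarith : 0 < p), WithLp.toLp_add, WithLp.toLp_sub,
    WithLp.toLp_ofLp] using lpNorm_add_sq_add_lpNorm_sub_sq_le hp x.ofLp y.ofLp

end lpNorm

theorem approx_caratheodory_general (d n : ℕ)
    (p : ℝ) (hp : 2 ≤ p) (v : Fin n → Fin d → ℝ)
    (hv : ∀ i, lpNorm p (v i) ≤ 1)
    (u : Fin d → ℝ) (hu : u ∈ convexHull ℝ (Set.range v))
    (ε : ℝ) (hε : 0 < ε) (k : ℕ) (hk : 4 * (p - 1) / ε ^ 2 ≤ (k : ℝ)) :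
    ∃ i : Fin k → Fin n,
      lpNorm p (fun j => (1 / (k : ℝ)) * (∑ t, v (i t) j) - u j) ≤ ε := by
  have hp₀ : 0 < p := by linarith
  have : Fact (1 ≤ ENNReal.ofReal p) := ⟨ENNReal.one_le_ofReal.mpr (by linarith)⟩
  have hu' : WithLp.toLp (ENNReal.ofReal p) u ∈
      convexHull ℝ (range fun i => WithLp.toLp (ENNReal.ofReal p) (v i)) := by
    have := mem_image_of_mem
      (WithLp.linearEquiv (ENNReal.ofReal p) ℝ (Fin d → ℝ)).symm.toLinearMap hu
    rwa [LinearMap.image_convexHull, ← range_comp] at this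
  have hv' : ∀ i, ‖WithLp.toLp (ENNReal.ofReal p) (v i)‖ ≤ 1 := fun i => by
    simpa only [lpNorm_eq_norm_toLp hp₀] using hv i
  obtain ⟨i, hi⟩ := exists_norm_inv_smul_sum_sub_le
    (E := PiLp (ENNReal.ofReal p) fun _ : Fin d => ℝ) (C := p - 1) (PiLp.norm_add_sq_add_norm_sub_sq_le hp) (by linarith) hv' hu' hε hk
  refine ⟨i, (lpNorm_eq_norm_toLp hp₀ _).trans_le (le_of_eq_of_le ?_ hi)⟩
  congr 1
  ext j
  simp [div_eq_inv_mul]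

/-- **Approximate Carathéodory theorem** (constructive version, Theorem 3.4 of the paper):
any point `u` in the convex hull of points `v₁, …, vₙ` of ℓ_p norm at most 1 can be
approximated to within `ε` in ℓ_p norm by the average of `k` of the points (with
repetitions), for any `k ≥ 4(p-1)/ε²`. -/
theorem approx_caratheodory (d n : ℕ) (hd : 0 < d) (hn : 0 < n)
    (p : ℝ) (hp : 2 ≤ p) (v : Fin n → Fin d → ℝ)
    (hv : ∀ i, lpNorm p (v i) ≤ 1)
    (u : Fin d → ℝ) (hu : u ∈ convexHull ℝ (Set.range v))
    (ε : ℝ) (hε : 0 < ε) (k : ℕ) (hk : 4 * (p - 1) / ε ^ 2 ≤ (k : ℝ)) :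
    ∃ i : Fin k → Fin n,
      lpNorm p (fun j => (1 / (k : ℝ)) * (∑ t, v (i t) j) - u j) ≤ ε :=
  approx_caratheodory_general d n p hp v hv u hu ε hε k hk
end

section
/- Let n be a positive integer and p ≥ 2 a real number. Let A be an n×n random matrix whose entries are independent and uniformly distributed on {−1, +1}, and set V = n^{−1/p}·A. Then E[‖V·(1/n, …, 1/n)ᵀ‖_p] ≤ √(p/n); consequently, for any ε > 0 with n ≥ p/ε², the probability that ‖V·(1/n,…,1/n)ᵀ‖_p ≥ ε is at most √(p/(nε²)). -/
open Finset

/-- The random `±1` matrix determined by a Boolean matrix `s`. -/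
noncomputable def signMatrix {n : ℕ} (s : Fin n → Fin n → Bool) : Fin n → Fin n → ℝ :=
  fun i j => if s i j then 1 else -1

/-!
Each row mean of the sign matrix is sub-Gaussian with variance proxy `1/n`: its exponential
moments are `cosh (t/n) ^ n ≤ exp (t²/(2n))`. The Chernoff-type estimate
`|x|^p ≤ (p/t)^p · exp (t|x| - p)` with `t = √(pn)` turns this into the moment bound
`𝔼 |row mean|^p ≤ (p/n)^(p/2)`. The factor `n^(-1/p)` makes `‖·‖_p^p` an average over the rows,
so `𝔼 ‖V·𝟙/n‖_p^p` is that same moment, and the power-mean inequality bounds `𝔼 ‖V·𝟙/n‖_p`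
by its `p`-th root `√(p/n)`. The tail bound is Markov's inequality.
-/

open Real
open scoped BigOperators

lemma lpNorm_nonneg {ι : Type*} [Fintype ι] (p : ℝ) (x : ι → ℝ) : 0 ≤ lpNorm p x :=
  rpow_nonneg (sum_nonneg fun _ _ => rpow_nonneg (abs_nonneg _) _) _

lemma lpNorm_rpow {ι : Type*} [Fintype ι] {p : ℝ} (hp : p ≠ 0) (x : ι → ℝ) :
    lpNorm p x ^ p = ∑ j, |x j| ^ p := by
  rw [lpNorm, one_div, rpow_inv_rpow (sum_nonneg fun _ _ => rpow_nonneg (abs_nonneg _) _) hp]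

lemma lpNorm_card_rpow_neg_inv_mul_rpow {ι : Type*} [Fintype ι] {p : ℝ} (hp : p ≠ 0)
    (x : ι → ℝ) :
    lpNorm p (fun i => (Fintype.card ι : ℝ) ^ (-(1 / p)) * x i) ^ p = 𝔼 i, |x i| ^ p := by
  have hc : ((Fintype.card ι : ℝ) ^ (-(1 / p))) ^ p = (Fintype.card ι : ℝ)⁻¹ := by
    rw [← rpow_mul (Nat.cast_nonneg _), neg_mul, one_div_mul_cancel hp, rpow_neg_one]
  simp_rw [lpNorm_rpow hp, abs_mul, abs_of_nonneg (rpow_nonneg (Nat.cast_nonneg _) _),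
    mul_rpow (rpow_nonneg (Nat.cast_nonneg _) _) (abs_nonneg _), hc, ← mul_sum,
    Fintype.expect_eq_sum_div_card, inv_mul_eq_div]

lemma expect_le_expect_rpow_rpow_inv {α : Type*} [Fintype α] [Nonempty α] {p : ℝ} (hp : 1 ≤ p)
    {f : α → ℝ} (hf : ∀ a, 0 ≤ f a) : 𝔼 a, f a ≤ (𝔼 a, f a ^ p) ^ p⁻¹ := by
  simpa using compact_inner_le_weight_mul_Lp_of_nonneg univ hp (w := fun _ => 1)
    (fun _ => zero_le_one) hf

lemma card_filter_div_card_le_expect_div {α : Type*} [Fintype α] {f : α → ℝ} (hf : ∀ a, 0 ≤ f a)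
    {ε : ℝ} (hε : 0 < ε) :
    (#{a | ε ≤ f a} : ℝ) / Fintype.card α ≤ (𝔼 a, f a) / ε := by
  have hmarkov : #{a | ε ≤ f a} • ε ≤ ∑ a, f a :=
    (card_nsmul_le_sum _ f ε fun a ha => (mem_filter.1 ha).2).trans
      (sum_le_sum_of_subset_of_nonneg (filter_subset _ _) fun a _ _ => hf a)
  rw [Fintype.expect_eq_sum_div_card, div_right_comm]
  gcongr
  rw [le_div_iff₀ hε, ← nsmul_eq_mul]
  exact hmarkov

lemma expect_comp_eval {ι β M : Type*} [Fintype ι] [DecidableEq ι] [Fintype β] [Nonempty β]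
    [AddCommMonoid M] [Module ℚ≥0 M] (g : β → M) (i : ι) : 𝔼 s : ι → β, g (s i) = 𝔼 b, g b := by
  rw [Fintype.expect_equiv (Equiv.funSplitAt i β) (fun s => g (s i)) (fun q => g q.1)
      fun s => rfl,
    ← univ_product_univ, expect_product' univ univ (fun b _ => g b)]
  simp only [Fintype.expect_const]

def boolSign (b : Bool) : ℝ := if b then 1 else -1

lemma expect_exp_mul_sum_boolSign {κ : Type*} [Fintype κ] [DecidableEq κ] (t : ℝ) :
    𝔼 r : κ → Bool, exp (t * ∑ j, boolSign (r j)) = cosh t ^ Fintype.card κ := by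
  have hsum : ∑ r : κ → Bool, exp (t * ∑ j, boolSign (r j)) = (2 * cosh t) ^ Fintype.card κ := by
    simp_rw [mul_sum, exp_sum]
    rw [← Fintype.prod_sum (fun (_ : κ) (b : Bool) => exp (t * boolSign b))]
    simp [boolSign, cosh_eq, mul_div_cancel₀]
  rw [Fintype.expect_eq_sum_div_card, hsum, Fintype.card_fun, Fintype.card_bool]
  push_cast
  rw [mul_pow, mul_div_cancel_left₀ _ (by positivity)]

lemma expect_exp_mul_expect_boolSign_le {κ : Type*} [Fintype κ] [DecidableEq κ] [Nonempty κ]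
    (t : ℝ) :
    𝔼 r : κ → Bool, exp (t * 𝔼 j, boolSign (r j)) ≤
      exp ((Fintype.card κ : ℝ)⁻¹ * t ^ 2 / 2) := by
  have hm : (0 : ℝ) < Fintype.card κ := Nat.cast_pos.2 Fintype.card_pos
  have hmean (r : κ → Bool) :
      t * 𝔼 j, boolSign (r j) = t / Fintype.card κ * ∑ j, boolSign (r j) :=
    by rw [Fintype.expect_eq_sum_div_card]; ring
  simp_rw [hmean, expect_exp_mul_sum_boolSign]
  calc cosh (t / Fintype.card κ) ^ Fintype.card κ
      ≤ exp ((t / Fintype.card κ) ^ 2 / 2) ^ Fintype.card κ := by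
        gcongr
        exact cosh_le_exp_half_sq _
    _ = exp ((Fintype.card κ : ℝ)⁻¹ * t ^ 2 / 2) := by
        rw [← exp_nat_mul]
        field_simp

lemma rpow_le_div_rpow_mul_exp {p t a : ℝ} (hp : 0 < p) (ht : 0 < t) (ha : 0 ≤ a) :
    a ^ p ≤ (p / t) ^ p * exp (t * a - p) := by
  have hu : 0 ≤ t * a / p := by positivity
  have hexp : t * a / p ≤ exp (t * a / p - 1) := by linarith [add_one_le_exp (t * a / p - 1)]
  calc a ^ p = ((p / t) * (t * a / p)) ^ p := by field_simp
    _ = (p / t) ^ p * (t * a / p) ^ p := mul_rpow (by positivity) hu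
    _ ≤ (p / t) ^ p * exp (t * a / p - 1) ^ p := by gcongr
    _ = (p / t) ^ p * exp (t * a - p) := by
        rw [← exp_mul]
        congr 2
        field_simp

lemma expect_abs_rpow_le_of_expect_exp_le {α : Type*} [Fintype α] (X : α → ℝ) {v p : ℝ}
    (hv : 0 < v) (hp : 2 ≤ p) (hX : ∀ t, 𝔼 a, exp (t * X a) ≤ exp (v * t ^ 2 / 2)) :
    𝔼 a, |X a| ^ p ≤ (p * v) ^ (p / 2) := by
  have hp0 : 0 < p := by linarith
  -- the Chernoff parameter balancing `(p / t) ^ p` against `exp (v * t ^ 2 / 2)`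
  set t := sqrt (p / v)
  have ht : 0 < t := sqrt_pos.2 (by positivity)
  have hvt : v * t ^ 2 = p := by rw [sq_sqrt (by positivity)]; field_simp
  have hpt : (p / t) ^ p = (p * v) ^ (p / 2) := by
    have hsq : (p / t) ^ 2 = p * v := by rw [div_pow, sq_sqrt (by positivity)]; field_simp
    rw [← hsq, ← rpow_natCast, ← rpow_mul (by positivity)]
    ring_nf
  have hpoint : ∀ a, |X a| ^ p ≤ (p / t) ^ p * exp (-p) * (exp (t * X a) + exp (-t * X a)) := by
    intro a
    have habs : exp (t * |X a|) ≤ exp (t * X a) + exp (-t * X a) := by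
      rcases abs_cases (X a) with ⟨h, _⟩ | ⟨h, _⟩ <;> rw [h]
      · linarith [exp_pos (-t * X a)]
      · rw [mul_neg, ← neg_mul]; linarith [exp_pos (t * X a)]
    calc |X a| ^ p ≤ (p / t) ^ p * exp (t * |X a| - p) :=
          rpow_le_div_rpow_mul_exp hp0 ht (abs_nonneg _)
      _ = (p / t) ^ p * exp (-p) * exp (t * |X a|) := by rw [sub_eq_neg_add, exp_add, mul_assoc]
      _ ≤ _ := by gcongr
  have hhalf : 2 * exp (-p) * exp (p / 2) ≤ 1 := by
    have h2 : 2 ≤ exp (p / 2) := by linarith [add_one_le_exp (p / 2)]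
    rw [mul_assoc, ← exp_add, show -p + p / 2 = -(p / 2) by ring, exp_neg, ← div_eq_mul_inv,
      div_le_one (exp_pos _)]
    exact h2
  calc 𝔼 a, |X a| ^ p ≤ 𝔼 a, (p / t) ^ p * exp (-p) * (exp (t * X a) + exp (-t * X a)) :=
        expect_le_expect fun a _ => hpoint a
    _ = (p / t) ^ p * exp (-p) * (𝔼 a, exp (t * X a) + 𝔼 a, exp (-t * X a)) := by
        rw [← mul_expect, expect_add_distrib]
    _ ≤ (p / t) ^ p * exp (-p) * (exp (v * t ^ 2 / 2) + exp (v * (-t) ^ 2 / 2)) := by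
        gcongr <;> apply hX
    _ = (p * v) ^ (p / 2) * (2 * exp (-p) * exp (p / 2)) := by
        rw [neg_sq, hvt, hpt]; ring
    _ ≤ (p * v) ^ (p / 2) := mul_le_of_le_one_right (by positivity) hhalf

lemma expect_lpNorm_rowMean_le_sqrt {ι κ : Type*} [Fintype ι] [DecidableEq ι] [Nonempty ι]
    [Fintype κ] [DecidableEq κ] [Nonempty κ] {p : ℝ} (hp : 2 ≤ p) :
    𝔼 s : ι → κ → Bool,
        lpNorm p (fun i => (Fintype.card ι : ℝ) ^ (-(1 / p)) * 𝔼 j, boolSign (s i j)) ≤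
      sqrt (p / Fintype.card κ) := by
  have hp0 : 0 < p := by linarith
  have hm : (0 : ℝ) < Fintype.card κ := Nat.cast_pos.2 Fintype.card_pos
  have hmoment :
      𝔼 r : κ → Bool, |𝔼 j, boolSign (r j)| ^ p ≤ (p / Fintype.card κ) ^ (p / 2) := by
    simpa only [div_eq_mul_inv] using expect_abs_rpow_le_of_expect_exp_le _ (inv_pos.2 hm) hp
      expect_exp_mul_expect_boolSign_le
  calc _ ≤ (𝔼 s : ι → κ → Bool, lpNorm p
            (fun i => (Fintype.card ι : ℝ) ^ (-(1 / p)) * 𝔼 j, boolSign (s i j)) ^ p) ^ p⁻¹ :=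
        expect_le_expect_rpow_rpow_inv (by linarith) fun s => lpNorm_nonneg _ _
    _ = (𝔼 r : κ → Bool, |𝔼 j, boolSign (r j)| ^ p) ^ p⁻¹ := by
        simp_rw [lpNorm_card_rpow_neg_inv_mul_rpow hp0.ne']
        rw [expect_comm]
        simp_rw [expect_comp_eval (fun r : κ → Bool => |𝔼 j, boolSign (r j)| ^ p)]
        rw [Fintype.expect_const]
    _ ≤ ((p / Fintype.card κ) ^ (p / 2)) ^ p⁻¹ := by gcongr
    _ = sqrt (p / Fintype.card κ) := by
        rw [← rpow_mul (by positivity), sqrt_eq_rpow]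
        congr 1
        field_simp

/-- **Lemma 4.4 of the paper**: for the random matrix `V = n^{-1/p}·A` with iid uniform
`±1` entries, `E[‖V·𝟙/n‖_p] ≤ √(p/n)`, and by Markov's inequality, if `n ≥ p/ε²` then
`P[‖V·𝟙/n‖_p ≥ ε] ≤ √(p/(nε²))`.  Expectation and probability are the uniform average
over all `2^{n²}` sign matrices. -/
theorem random_matrix_center_bound (n : ℕ) (hn : 0 < n) (p : ℝ) (hp : 2 ≤ p) :
    (∑ s : Fin n → Fin n → Bool,
        lpNorm p (fun i => (n : ℝ) ^ (-(1 / p)) * ∑ j, signMatrix s i j * (1 / (n : ℝ)))) /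
      (Fintype.card (Fin n → Fin n → Bool) : ℝ) ≤ Real.sqrt (p / n) ∧
    ∀ ε : ℝ, 0 < ε → p / ε ^ 2 ≤ (n : ℝ) →
      ((Finset.univ.filter (fun s : Fin n → Fin n → Bool =>
          ε ≤ lpNorm p (fun i =>
            (n : ℝ) ^ (-(1 / p)) * ∑ j, signMatrix s i j * (1 / (n : ℝ))))).card : ℝ) /
        (Fintype.card (Fin n → Fin n → Bool) : ℝ) ≤ Real.sqrt (p / (n * ε ^ 2)) := by
  have : Nonempty (Fin n) := ⟨⟨0, hn⟩⟩
  have hrowMean (s : Fin n → Fin n → Bool) (i : Fin n) :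
      ∑ j, signMatrix s i j * (1 / (n : ℝ)) = 𝔼 j, boolSign (s i j) := by
    rw [← sum_mul, mul_one_div, Fintype.expect_eq_sum_div_card, Fintype.card_fin]
    rfl
  have hmean := expect_lpNorm_rowMean_le_sqrt (ι := Fin n) (κ := Fin n) hp
  simp only [Fintype.card_fin, ← hrowMean] at hmean
  refine ⟨by rwa [Fintype.expect_eq_sum_div_card] at hmean, fun ε hε _ => ?_⟩
  calc _ ≤ _ / ε := card_filter_div_card_le_expect_div (fun s => lpNorm_nonneg _ _) hε
    _ ≤ sqrt (p / n) / ε := by gcongr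
    _ = sqrt (p / (n * ε ^ 2)) := by rw [← div_div, sqrt_div' _ (sq_nonneg ε), sqrt_sq hε.le]
end

section
/- There exist constants c̃ > 0, C̃ > 0 and c > 0 such that the following holds. For every positive integer k and every ρ with 0 < ρ ≤ 1/2, let X₁, …, X_k be independent {0,1}-valued random variables with P[Xᵢ = 1] = ρ, and let σ = √(k·ρ·(1−ρ)). Then for every real λ with 0 < λ ≤ c·σ, P[ |Σ_{i=1}^k Xᵢ − ρ·k| ≥ λ·σ ] ≥ c̃·exp(−C̃·λ²). -/
/-!
The probability of the event is the binomial tail `∑_{λσ ≤ |m - ρk|} C(k,m) ρ^m (1-ρ)^(k-m)`.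

If `σ ≤ 2` then `ρk ≤ 2σ² ≤ 8`, and the term `m = 0` alone gives `(1-ρ)^k ≥ e^{-2ρk} ≥ e^{-16}`.

If `σ > 2`, the window `ρk + λσ ≤ m ≤ ρk + (λ+1)σ` lies in the tail and contains at least
`σ - 1 ≥ σ/2` integers. For each of them Stirling's bounds give
`C(k,m) ρ^m (1-ρ)^(k-m) ≥ e^{-2} √(2k/(m(k-m))) e^{-KL}`, where `KL = k·D(m/k ‖ ρ)` is at most
the χ²-distance `(m - ρk)²/σ²`, and `λ ≤ σ/4` keeps `m(k-m) ≤ 2kσ²` and `(m-ρk)² ≤ (2λ²+2)σ²`.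
So every term of the window is at least `e^{-4} σ⁻¹ e^{-2λ²}`.
-/

open Finset Real Nat

theorem prod_ite_eq_pow_mul_pow {α M : Type*} [Fintype α] [CommMonoid M] (ω : α → Bool) (a b : M) :
    ∏ i, (if ω i then a else b) = a ^ #{i | ω i} * b ^ (Fintype.card α - #{i | ω i}) := by
  rw [prod_ite, prod_const, prod_const, ← Finset.card_univ,
    ← card_filter_add_card_filter_not (s := univ) (fun i ↦ ω i), Nat.add_sub_cancel_left]

theorem sum_fun_bool_eq_sum_finset {α M : Type*} [Fintype α] [DecidableEq α] [AddCommMonoid M]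
    (f : Finset α → M) : ∑ ω : α → Bool, f {i | ω i} = ∑ s : Finset α, f s :=
  sum_nbij' (fun ω ↦ ({i | ω i} : Finset α)) (fun s i ↦ decide (i ∈ s)) (by simp) (by simp)
    (fun ω _ ↦ by funext i; simp) (fun s _ ↦ by ext i; simp) (fun _ _ ↦ rfl)

theorem sum_filter_card_prod_ite {R : Type*} [CommSemiring R] (k : ℕ) (a b : R) (p : ℕ → Prop)
    [DecidablePred p] :
    ∑ ω ∈ univ.filter (fun ω : Fin k → Bool ↦ p #{i | ω i}), ∏ i, (if ω i then a else b) =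
      ∑ m ∈ (range (k + 1)).filter p, k.choose m * a ^ m * b ^ (k - m) := by
  simp_rw [sum_filter, prod_ite_eq_pow_mul_pow, Fintype.card_fin]
  rw [sum_fun_bool_eq_sum_finset (fun s ↦ if p #s then a ^ #s * b ^ (k - #s) else 0),
    ← powerset_univ, sum_powerset_apply_card (fun m ↦ if p m then a ^ m * b ^ (k - m) else 0),
    Finset.card_univ, Fintype.card_fin]
  simp_rw [nsmul_eq_mul, mul_ite, mul_zero, mul_assoc]

theorem factorial_le_exp_one_mul_stirling {n : ℕ} (hn : n ≠ 0) :
    (n ! : ℝ) ≤ exp 1 * √n * (n / exp 1) ^ n := by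
  obtain ⟨m, rfl⟩ : ∃ m, n = m + 1 := ⟨n - 1, by omega⟩
  have h : Stirling.stirlingSeq (m + 1) ≤ exp 1 / √2 := by
    rw [← Stirling.stirlingSeq_one]
    exact Stirling.stirlingSeq'_antitone (Nat.zero_le m)
  rw [Stirling.stirlingSeq, div_le_div_iff₀ (by positivity) (by positivity),
    sqrt_mul' _ (by positivity)] at h
  refine le_of_mul_le_mul_right ?_ (sqrt_pos.2 (show (0:ℝ) < 2 by norm_num))
  linarith

theorem choose_add_ge_stirling {m b : ℕ} (hm : m ≠ 0) (hb : b ≠ 0) :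
    √(2 * (m + b) / (m * b)) / exp 1 ^ 2 * ((m + b) ^ (m + b) / (m ^ m * b ^ b)) ≤
      ((m + b).choose m : ℝ) := by
  have hm' : (0 : ℝ) < m := by positivity
  have hchoose : ((m + b).choose m : ℝ) = (m + b)! / (m ! * b !) := by
    rw [Nat.cast_choose ℝ (Nat.le_add_right m b), Nat.add_sub_cancel_left]
  have hnum : √(2 * (m + b)) * ((m + b) / exp 1) ^ (m + b) ≤ ((m + b)! : ℝ) := by
    refine le_trans ?_ (Stirling.le_factorial_stirling (m + b))
    push_cast
    gcongr
    nlinarith [pi_gt_three]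
  have hden : (m ! * b ! : ℝ) ≤ exp 1 * √m * (m / exp 1) ^ m * (exp 1 * √b * (b / exp 1) ^ b) :=
    mul_le_mul (factorial_le_exp_one_mul_stirling hm) (factorial_le_exp_one_mul_stirling hb)
      (by positivity) (by positivity)
  rw [hchoose]
  refine le_trans (le_of_eq ?_) (div_le_div₀ (by positivity) hnum (by positivity) hden)
  rw [sqrt_div (by positivity), sqrt_mul hm'.le]
  simp only [div_pow, pow_add]
  field_simp

theorem exp_mul_one_sub_inv_le_pow {x : ℝ} (hx : 0 < x) (n : ℕ) :
    exp (n * (1 - x⁻¹)) ≤ x ^ n :=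
  calc exp (n * (1 - x⁻¹)) ≤ exp (n * log x) :=
        exp_le_exp.2 (mul_le_mul_of_nonneg_left (one_sub_inv_le_log_of_pos hx) n.cast_nonneg)
    _ = x ^ n := by rw [exp_nat_mul, exp_log hx]

theorem exp_neg_chiSq_le_pow_mul_pow {m b : ℕ} {ρ : ℝ} (hm : m ≠ 0) (hb : b ≠ 0) (hρ0 : 0 < ρ)
    (hρ1 : ρ < 1) :
    exp (-(m - (m + b) * ρ) ^ 2 / ((m + b) * ρ * (1 - ρ))) ≤
      ((m + b) * ρ / m) ^ m * ((m + b) * (1 - ρ) / b) ^ b := by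
  have hρ1' : 0 < 1 - ρ := by linarith
  -- the bounds `log x ≥ 1 - x⁻¹` for the two factors add up to exactly `-χ²`
  have hsplit : -(m - (m + b) * ρ) ^ 2 / ((m + b) * ρ * (1 - ρ)) =
      m * (1 - ((m + b) * ρ / m)⁻¹) + b * (1 - ((m + b) * (1 - ρ) / b)⁻¹) := by
    field_simp
    ring
  rw [hsplit, exp_add]
  exact mul_le_mul (exp_mul_one_sub_inv_le_pow (by positivity) m)
    (exp_mul_one_sub_inv_le_pow (by positivity) b) (exp_pos _).le (by positivity)

theorem choose_add_mul_pow_mul_pow_ge {m b : ℕ} {ρ : ℝ} (hm : m ≠ 0) (hb : b ≠ 0) (hρ0 : 0 < ρ)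
    (hρ1 : ρ < 1) :
    √(2 * (m + b) / (m * b)) / exp 1 ^ 2 * exp (-(m - (m + b) * ρ) ^ 2 / ((m + b) * ρ * (1 - ρ))) ≤
      (m + b).choose m * ρ ^ m * (1 - ρ) ^ b := by
  calc _ ≤ √(2 * (m + b) / (m * b)) / exp 1 ^ 2 *
        (((m + b) * ρ / m) ^ m * ((m + b) * (1 - ρ) / b) ^ b) := by
        gcongr
        exact exp_neg_chiSq_le_pow_mul_pow hm hb hρ0 hρ1
    _ = √(2 * (m + b) / (m * b)) / exp 1 ^ 2 * ((m + b) ^ (m + b) / (m ^ m * b ^ b)) *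
        (ρ ^ m * (1 - ρ) ^ b) := by
        simp only [div_pow, mul_pow, pow_add]
        ring
    _ ≤ _ := by
        rw [mul_assoc _ (ρ ^ m)]
        gcongr
        exact choose_add_ge_stirling hm hb

theorem exp_neg_two_mul_le_one_sub {ρ : ℝ} (h0 : 0 ≤ ρ) (h : ρ ≤ 1 / 2) : exp (-(2 * ρ)) ≤ 1 - ρ :=
  calc exp (-(2 * ρ)) = (exp (2 * ρ))⁻¹ := exp_neg _
    _ ≤ (1 + 2 * ρ)⁻¹ := inv_anti₀ (by positivity) (by linarith [add_one_le_exp (2 * ρ)])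
    _ ≤ 1 - ρ := by
      rw [inv_le_iff_one_le_mul₀ (by positivity)]
      nlinarith

theorem sub_one_le_card_Icc_ceil_floor {x s : ℝ} (hx : 0 ≤ x) (hs : 0 ≤ s) :
    s - 1 ≤ #(Icc ⌈x⌉₊ ⌊x + s⌋₊) := by
  have h1 : (⌈x⌉₊ : ℝ) < x + 1 := ceil_lt_add_one hx
  have h2 : x + s - 1 < ⌊x + s⌋₊ := sub_one_lt_floor _
  have hle : ⌈x⌉₊ < ⌊x + s⌋₊ + 2 := by exact_mod_cast (by linarith : (⌈x⌉₊ : ℝ) < ⌊x + s⌋₊ + 2)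
  rw [Nat.card_Icc, Nat.cast_sub (by omega)]
  push_cast
  linarith

section BinomialTail

variable {k m : ℕ} {ρ σ lam : ℝ}

theorem pos_and_lt_of_mem_window (hρ0 : 0 < ρ) (hρ : ρ ≤ 1 / 2) (hσ : σ ^ 2 = k * ρ * (1 - ρ))
    (hσ2 : 2 < σ) (hlam0 : 0 ≤ lam) (hlam : lam ≤ σ / 4) (hlo : ρ * k + lam * σ ≤ m)
    (hhi : m ≤ ρ * k + (lam + 1) * σ) : 0 < m ∧ m < k := by
  have hk : (0 : ℝ) < k := by
    refine k.cast_nonneg.lt_of_ne fun hk ↦ ?_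
    rw [← hk] at hσ
    nlinarith
  have hhi' : (m : ℝ) ≤ ρ * k + 3 / 4 * (k * ρ * (1 - ρ)) := by nlinarith
  constructor
  · exact_mod_cast (show (0 : ℝ) < m by nlinarith)
  · exact_mod_cast (show (m : ℝ) < k by nlinarith [mul_pos hk hρ0])

theorem choose_mul_pow_mul_pow_ge_of_mem_window (hρ0 : 0 < ρ) (hρ : ρ ≤ 1 / 2)
    (hσ : σ ^ 2 = k * ρ * (1 - ρ)) (hσ2 : 2 < σ) (hlam0 : 0 ≤ lam) (hlam : lam ≤ σ / 4)
    (hlo : ρ * k + lam * σ ≤ m) (hhi : m ≤ ρ * k + (lam + 1) * σ) :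
    exp (-4) / σ * exp (-2 * lam ^ 2) ≤ k.choose m * ρ ^ m * (1 - ρ) ^ (k - m) := by
  obtain ⟨hm, hmk⟩ := pos_and_lt_of_mem_window hρ0 hρ hσ hσ2 hlam0 hlam hlo hhi
  obtain ⟨b, rfl⟩ : ∃ b, k = m + b := ⟨k - m, by omega⟩
  have hb : b ≠ 0 := by omega
  rw [Nat.add_sub_cancel_left]
  push_cast at hσ hlo hhi ⊢
  have hσ0 : 0 < σ := by linarith
  have hb' : (0 : ℝ) < b := by positivity
  have hρm : ρ * (m + b) ≤ m := by nlinarith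
  have hm74 : (m : ℝ) ≤ 7 / 4 * (ρ * (m + b)) := by nlinarith
  have hdev : (m - (m + b) * ρ) ^ 2 ≤ (2 * lam ^ 2 + 2) * σ ^ 2 := by
    have h := pow_le_pow_left₀ (by linarith) (show m - (m + b) * ρ ≤ (lam + 1) * σ by linarith) 2
    nlinarith [sq_nonneg (lam - 1)]
  have hsqrt : 1 / σ ≤ √(2 * (m + b) / (m * b)) := by
    rw [le_sqrt' (by positivity), div_pow, one_pow, div_le_div_iff₀ (by positivity) (by positivity)]
    have hb_le : (b : ℝ) ≤ (m + b) * (1 - ρ) := by linarith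
    nlinarith [mul_le_mul hm74 hb_le hb'.le (by positivity)]
  have hexp : -(2 * lam ^ 2 + 2) ≤ -(m - (m + b) * ρ) ^ 2 / ((m + b) * ρ * (1 - ρ)) := by
    rw [← hσ, neg_div, neg_le_neg_iff, div_le_iff₀ (by positivity)]
    exact hdev
  have hconst : exp (-4) * exp (-2 * lam ^ 2) = exp (-(2 * lam ^ 2 + 2)) / exp 1 ^ 2 := by
    rw [← exp_nat_mul, eq_div_iff (exp_pos _).ne', ← exp_add, ← exp_add]
    ring_nf
  calc exp (-4) / σ * exp (-2 * lam ^ 2) = 1 / σ / exp 1 ^ 2 * exp (-(2 * lam ^ 2 + 2)) := by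
        rw [div_mul_eq_mul_div, hconst]
        ring
    _ ≤ _ := by gcongr
    _ ≤ _ := choose_add_mul_pow_mul_pow_ge (by omega) hb hρ0 (by linarith)

theorem exp_neg_sq_le_sum_choose_of_two_lt (hρ0 : 0 < ρ) (hρ : ρ ≤ 1 / 2)
    (hσ : σ ^ 2 = k * ρ * (1 - ρ)) (hσ2 : 2 < σ) (hlam0 : 0 ≤ lam) (hlam : lam ≤ σ / 4) :
    exp (-4) / 2 * exp (-2 * lam ^ 2) ≤
      ∑ m ∈ (range (k + 1)).filter (fun m : ℕ ↦ lam * σ ≤ |(m : ℝ) - ρ * k|),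
        k.choose m * ρ ^ m * (1 - ρ) ^ (k - m) := by
  set W := Icc ⌈ρ * k + lam * σ⌉₊ ⌊ρ * k + lam * σ + σ⌋₊
  have hσ0 : 0 < σ := by linarith
  have hstart : 0 ≤ ρ * k + lam * σ := by positivity
  have hwindow : ∀ m ∈ W, ρ * k + lam * σ ≤ m ∧ m ≤ ρ * k + (lam + 1) * σ := by
    intro m hm
    rw [mem_Icc, ceil_le, le_floor_iff (by positivity)] at hm
    exact ⟨hm.1, by linarith⟩
  have hsub : W ⊆ (range (k + 1)).filter (fun m : ℕ ↦ lam * σ ≤ |(m : ℝ) - ρ * k|) := by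
    intro m hm
    obtain ⟨hlo, hhi⟩ := hwindow m hm
    have hmk := (pos_and_lt_of_mem_window hρ0 hρ hσ hσ2 hlam0 hlam hlo hhi).2
    rw [mem_filter, mem_range]
    exact ⟨by omega, le_abs.2 (Or.inl (by linarith))⟩
  have hhalf : exp (-4) / 2 ≤ (σ - 1) * (exp (-4) / σ) := by
    rw [mul_div_assoc', le_div_iff₀ hσ0]
    nlinarith [exp_pos (-4)]
  calc exp (-4) / 2 * exp (-2 * lam ^ 2)
      ≤ (σ - 1) * (exp (-4) / σ * exp (-2 * lam ^ 2)) := by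
        rw [← mul_assoc]
        gcongr
    _ ≤ #W * (exp (-4) / σ * exp (-2 * lam ^ 2)) := by
        gcongr
        exact sub_one_le_card_Icc_ceil_floor hstart hσ0.le
    _ ≤ ∑ m ∈ W, k.choose m * ρ ^ m * (1 - ρ) ^ (k - m) := by
        rw [← nsmul_eq_mul]
        exact card_nsmul_le_sum _ _ _ fun m hm ↦
          choose_mul_pow_mul_pow_ge_of_mem_window hρ0 hρ hσ hσ2 hlam0 hlam (hwindow m hm).1
            (hwindow m hm).2
    _ ≤ _ := sum_le_sum_of_subset_of_nonneg hsub fun m _ _ ↦ by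
        have : 0 ≤ 1 - ρ := by linarith
        positivity

theorem exp_neg_sixteen_le_sum_choose_of_le_two (hρ0 : 0 < ρ) (hρ : ρ ≤ 1 / 2)
    (hσ : σ ^ 2 = k * ρ * (1 - ρ)) (hσ2 : σ ≤ 2) (hσ0 : 0 ≤ σ) (hlam : lam ≤ σ / 4) :
    exp (-16) ≤ ∑ m ∈ (range (k + 1)).filter (fun m : ℕ ↦ lam * σ ≤ |(m : ℝ) - ρ * k|),
        k.choose m * ρ ^ m * (1 - ρ) ^ (k - m) := by
  have hρk : ρ * k ≤ 2 * σ ^ 2 := by nlinarith [k.cast_nonneg (α := ℝ)]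
  have hσρk : σ ^ 2 ≤ ρ * k := by nlinarith [k.cast_nonneg (α := ℝ)]
  have hρ1 : 0 ≤ 1 - ρ := by linarith
  have hmem : 0 ∈ (range (k + 1)).filter (fun m : ℕ ↦ lam * σ ≤ |(m : ℝ) - ρ * k|) := by
    rw [mem_filter, CharP.cast_eq_zero, zero_sub, abs_neg, abs_of_nonneg (by positivity)]
    exact ⟨by simp, by nlinarith [mul_le_mul_of_nonneg_right hlam hσ0]⟩
  calc exp (-16) ≤ exp (-(2 * ρ)) ^ k := by
        rw [← exp_nat_mul, exp_le_exp]
        nlinarith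
    _ ≤ (1 - ρ) ^ k := by
        gcongr
        exact exp_neg_two_mul_le_one_sub hρ0.le hρ
    _ = k.choose 0 * ρ ^ 0 * (1 - ρ) ^ (k - 0) := by simp
    _ ≤ _ := single_le_sum (f := fun m ↦ k.choose m * ρ ^ m * (1 - ρ) ^ (k - m))
        (fun m _ ↦ by positivity) hmem

end BinomialTail

/-- **Anti-concentration for the binomial distribution** (Lemma 4.6 of the paper):
there are constants `c̃, C̃, c > 0` such that for iid Bernoulli(ρ) variables
`X₁, …, X_k` with `0 < ρ ≤ 1/2` and `σ = √(kρ(1-ρ))`, for every `0 < λ ≤ c·σ`,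
`P[|Σ Xᵢ - ρk| ≥ λσ] ≥ c̃·exp(-C̃·λ²)`.  The probability is written explicitly as a
sum of the product weights of the outcomes `ω : Fin k → Bool` in the event. -/
theorem binomial_anticoncentration :
    ∃ ctil Ctil c : ℝ, 0 < ctil ∧ 0 < Ctil ∧ 0 < c ∧
      ∀ (k : ℕ), 0 < k → ∀ (ρ : ℝ), 0 < ρ → ρ ≤ 1 / 2 →
      ∀ (lam : ℝ), 0 < lam → lam ≤ c * Real.sqrt (k * ρ * (1 - ρ)) →
      ctil * Real.exp (-Ctil * lam ^ 2) ≤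
        ∑ ω ∈ Finset.univ.filter (fun ω : Fin k → Bool =>
            lam * Real.sqrt (k * ρ * (1 - ρ)) ≤
              |(∑ i, (if ω i then (1 : ℝ) else 0)) - ρ * k|),
          ∏ i, (if ω i then ρ else 1 - ρ) := by
  refine ⟨min (exp (-16)) (exp (-4) / 2), 2, 1 / 4, by positivity, two_pos, by norm_num, ?_⟩
  intro k _ ρ hρ0 hρ lam hlam0 hlam
  set σ := √(k * ρ * (1 - ρ))
  have hσ : σ ^ 2 = k * ρ * (1 - ρ) := sq_sqrt (mul_nonneg (by positivity) (by linarith))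
  have hcount (ω : Fin k → Bool) : ∑ i, (if ω i then (1 : ℝ) else 0) = #{i | ω i} := by
    simp [sum_boole]
  simp_rw [hcount]
  rw [sum_filter_card_prod_ite k ρ (1 - ρ) (fun m ↦ lam * σ ≤ |(m : ℝ) - ρ * k|)]
  rcases le_or_gt σ 2 with hσ2 | hσ2
  · calc min (exp (-16)) (exp (-4) / 2) * exp (-2 * lam ^ 2) ≤ exp (-16) * 1 := by
          gcongr
          · exact min_le_left _ _
          · exact exp_le_one_iff.2 (by nlinarith)
      _ ≤ _ := by
          rw [mul_one]
          exact exp_neg_sixteen_le_sum_choose_of_le_two hρ0 hρ hσ hσ2 (sqrt_nonneg _) (by linarith)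
  · calc min (exp (-16)) (exp (-4) / 2) * exp (-2 * lam ^ 2)
        ≤ exp (-4) / 2 * exp (-2 * lam ^ 2) := by gcongr; exact min_le_right _ _
      _ ≤ _ := exp_neg_sq_le_sum_choose_of_two_lt hρ0 hρ hσ hσ2 hlam0.le (by linarith)
end

section
/- Let Q ⊆ ℝ^d be a nonempty convex set, let N be a norm on ℝ^d, and let N* denote its dual norm, N*(z) = sup{⟨z, x⟩ : N(x) ≤ 1}. Let σ > 0 and let f : Q → ℝ be (1/σ)-strongly convex with respect to N, meaning: for all x, y ∈ Q and every g ∈ ℝ^d satisfying f(z) ≥ f(x) + ⟨g, z − x⟩ for all z ∈ Q, one has f(y) − f(x) − ⟨g, y − x⟩ ≥ (1/(2σ))·N(y − x)². Let z₁, z₂ ∈ ℝ^d and suppose y₁ ∈ Q maximizes y ↦ ⟨z₁, y⟩ − f(y) over Q and y₂ ∈ Q maximizes y ↦ ⟨z₂, y⟩ − f(y) over Q. Then N(y₁ − y₂) ≤ σ·N*(z₁ − z₂), and moreover the Fenchel conjugate f*(z) = sup_{y ∈ Q}(⟨z, y⟩ − f(y)) satisfies f*(z₂) − f*(z₁) −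 ⟨y₁, z₂ − z₁⟩ ≤ (σ/2)·N*(z₂ − z₁)². -/
open Finset

/-- The standard inner product on `ℝ^d`. -/
noncomputable def dotp {d : ℕ} (x y : Fin d → ℝ) : ℝ := ∑ i, x i * y i

/-- The dual norm `N*(z) = sup {⟨z,x⟩ : N(x) ≤ 1}`. -/
noncomputable def dualNorm {d : ℕ} (N : (Fin d → ℝ) → ℝ) (z : Fin d → ℝ) : ℝ :=
  sSup ((fun x => dotp z x) '' {x | N x ≤ 1})

/-! Maximality of `y₁` and `y₂` says that `z₁` and `z₂` are subgradients of `f` at `y₁` and `y₂`.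
Applying strong convexity at both points and adding gives
`N(y₁ - y₂)² / σ ≤ ⟨z₁ - z₂, y₁ - y₂⟩ ≤ N*(z₁ - z₂) N(y₁ - y₂)`. For the conjugate, with
`t = N(y₂ - y₁)` and `D = N*(z₂ - z₁)`,
`f*(z₂) - f*(z₁) - ⟨y₁, z₂ - z₁⟩ = ⟨z₂ - z₁, y₂ - y₁⟩ - (f y₂ - f y₁ - ⟨z₁, y₂ - y₁⟩)
  ≤ D t - t² / (2σ) ≤ σ D² / 2`.
Both `sSup`s are genuine suprema: `f*` is attained at the maximizers, and the `N`-unit ball is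
compact because `N`, being convex on a finite-dimensional space, is continuous. -/

section Dotp

variable {d : ℕ}

lemma dotp_comm (x y : Fin d → ℝ) : dotp x y = dotp y x := dotProduct_comm x y

lemma dotp_sub_left (x y z : Fin d → ℝ) : dotp (x - y) z = dotp x z - dotp y z :=
  sub_dotProduct x y z

lemma dotp_sub_right (x y z : Fin d → ℝ) : dotp x (y - z) = dotp x y - dotp x z :=
  dotProduct_sub x y z

lemma dotp_smul_right (a : ℝ) (x y : Fin d → ℝ) : dotp x (a • y) = a * dotp x y :=
  dotProduct_smul a x y

lemma dotp_zero_right (x : Fin d → ℝ) : dotp x 0 = 0 := dotProduct_zero x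

lemma continuous_dotp (z : Fin d → ℝ) : Continuous (dotp z) := by
  unfold dotp
  fun_prop

end Dotp

structure IsNormFun {E : Type*} [AddCommGroup E] [Module ℝ E] (N : E → ℝ) : Prop where
  eq_zero_iff : ∀ x, N x = 0 ↔ x = 0
  smul : ∀ (a : ℝ) (x : E), N (a • x) = |a| * N x
  add_le : ∀ x y, N (x + y) ≤ N x + N y

namespace IsNormFun

section VectorSpace

variable {E : Type*} [AddCommGroup E] [Module ℝ E] {N : E → ℝ}

lemma map_zero (hN : IsNormFun N) : N 0 = 0 := (hN.eq_zero_iff 0).mpr rfl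

lemma map_neg (hN : IsNormFun N) (x : E) : N (-x) = N x := by
  simpa using hN.smul (-1) x

lemma map_sub_rev (hN : IsNormFun N) (x y : E) : N (x - y) = N (y - x) := by
  rw [← neg_sub, hN.map_neg]

lemma nonneg (hN : IsNormFun N) (x : E) : 0 ≤ N x := by
  have h := hN.add_le x (-x)
  rw [add_neg_cancel, hN.map_zero, hN.map_neg] at h
  linarith

lemma convexOn (hN : IsNormFun N) : ConvexOn ℝ Set.univ N := by
  refine ⟨convex_univ, fun x _ y _ a b ha hb _ => ?_⟩
  calc N (a • x + b • y) ≤ N (a • x) + N (b • y) := hN.add_le _ _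
    _ = a • N x + b • N y := by rw [hN.smul, hN.smul, abs_of_nonneg ha, abs_of_nonneg hb]; rfl

end VectorSpace

section FiniteDimensional

variable {E : Type*} [NormedAddCommGroup E] [NormedSpace ℝ E] [FiniteDimensional ℝ E]
  {N : E → ℝ}

lemma continuous (hN : IsNormFun N) : Continuous N :=
  continuousOn_univ.mp (hN.convexOn.continuousOn isOpen_univ)

lemma exists_pos_mul_norm_le (hN : IsNormFun N) : ∃ c > 0, ∀ x, c * ‖x‖ ≤ N x := by
  have hpos : ∀ x ∈ Metric.sphere (0 : E) 1, 0 < N x := fun x hx =>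
    (hN.nonneg x).lt_of_ne' fun h => by simp [(hN.eq_zero_iff x).mp h] at hx
  obtain ⟨c, hc, hcN⟩ :=
    (isCompact_sphere (0 : E) 1).exists_forall_le' hN.continuous.continuousOn hpos
  refine ⟨c, hc, fun x => ?_⟩
  rcases eq_or_ne x 0 with rfl | hx
  · simp [hN.map_zero]
  have hnx : 0 < ‖x‖ := norm_pos_iff.mpr hx
  have hcx := hcN (‖x‖⁻¹ • x) (by simp [norm_smul, hnx.ne'])
  rw [hN.smul, abs_inv, abs_norm, ← div_eq_inv_mul, le_div_iff₀ hnx] at hcx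
  exact hcx

lemma isCompact_setOf_le_one (hN : IsNormFun N) : IsCompact {x | N x ≤ 1} := by
  obtain ⟨c, hc, hcN⟩ := hN.exists_pos_mul_norm_le
  refine Metric.isCompact_of_isClosed_isBounded
    (isClosed_le hN.continuous continuous_const) ((Metric.isBounded_closedBall (x := 0)
      (r := c⁻¹)).subset fun x (hx : N x ≤ 1) => ?_)
  rw [mem_closedBall_zero_iff, ← one_div, le_div_iff₀' hc]
  exact (hcN x).trans hx

end FiniteDimensional

end IsNormFun

section DualNorm

variable {d : ℕ} {N : (Fin d → ℝ) → ℝ}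

lemma bddAbove_dotp_image (hN : IsNormFun N) (z : Fin d → ℝ) :
    BddAbove ((fun x => dotp z x) '' {x | N x ≤ 1}) :=
  hN.isCompact_setOf_le_one.bddAbove_image (continuous_dotp z).continuousOn

lemma dualNorm_nonneg (hN : IsNormFun N) (z : Fin d → ℝ) : 0 ≤ dualNorm N z :=
  le_csSup (bddAbove_dotp_image hN z) ⟨0, by simp [hN.map_zero], dotp_zero_right z⟩

lemma dotp_le_dualNorm_mul (hN : IsNormFun N) (z x : Fin d → ℝ) :
    dotp z x ≤ dualNorm N z * N x := by
  rcases (hN.nonneg x).eq_or_lt with hx | hx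
  · simp [(hN.eq_zero_iff x).mp hx.symm, hN.map_zero, dotp_zero_right]
  have hunit : N ((N x)⁻¹ • x) ≤ 1 := by
    rw [hN.smul, abs_inv, abs_of_pos hx, inv_mul_cancel₀ hx.ne']
  have hle : dotp z ((N x)⁻¹ • x) ≤ dualNorm N z :=
    le_csSup (bddAbove_dotp_image hN z) ⟨_, hunit, rfl⟩
  rwa [dotp_smul_right, inv_mul_le_iff₀ hx, mul_comm] at hle

end DualNorm

lemma IsMaxOn.csSup_image_eq {α β : Type*} [ConditionallyCompleteLattice β] {f : α → β}
    {s : Set α} {a : α} (ha : a ∈ s) (hmax : IsMaxOn f s a) : sSup (f '' s) = f a :=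
  IsGreatest.csSup_eq ⟨Set.mem_image_of_mem f ha, Set.forall_mem_image.mpr (isMaxOn_iff.mp hmax)⟩

lemma add_dotp_sub_le_of_isMaxOn {d : ℕ} {Q : Set (Fin d → ℝ)} {f : (Fin d → ℝ) → ℝ}
    {z y₀ : Fin d → ℝ} (hmax : IsMaxOn (fun y => dotp z y - f y) Q y₀) :
    ∀ x ∈ Q, f y₀ + dotp z (x - y₀) ≤ f x := fun x hx => by
  rw [dotp_sub_right]
  linarith [isMaxOn_iff.mp hmax x hx]

lemma le_mul_of_sq_le_mul {t σ D : ℝ} (ht : 0 ≤ t) (hσ : 0 < σ) (hD : 0 ≤ D)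
    (h : 1 / σ * t ^ 2 ≤ D * t) : t ≤ σ * D := by
  rcases ht.eq_or_lt with rfl | ht
  · positivity
  rw [div_mul_eq_mul_div, one_mul, div_le_iff₀ hσ, sq] at h
  nlinarith

lemma mul_sub_sq_div_le {t σ D : ℝ} (hσ : 0 < σ) :
    D * t - 1 / (2 * σ) * t ^ 2 ≤ σ / 2 * D ^ 2 := by
  have key : 0 ≤ (σ * D - t) ^ 2 / (2 * σ) := by positivity
  have expand : (σ * D - t) ^ 2 / (2 * σ) = σ / 2 * D ^ 2 - (D * t - 1 / (2 * σ) * t ^ 2) := by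
    field_simp
    ring
  linarith

theorem strong_convexity_implies_dual_smoothness_general
    (d : ℕ) (Q : Set (Fin d → ℝ))
    (N : (Fin d → ℝ) → ℝ)
    (hN0 : ∀ x, N x = 0 ↔ x = 0)
    (hNsmul : ∀ (a : ℝ) (x : Fin d → ℝ), N (a • x) = |a| * N x)
    (hNtri : ∀ x y, N (x + y) ≤ N x + N y)
    (σ : ℝ) (hσ : 0 < σ)
    (f : (Fin d → ℝ) → ℝ)
    (hstrong : ∀ x ∈ Q, ∀ y ∈ Q, ∀ g : Fin d → ℝ,
      (∀ z ∈ Q, f x + dotp g (z - x) ≤ f z) →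
      (1 / (2 * σ)) * N (y - x) ^ 2 ≤ f y - f x - dotp g (y - x))
    (z₁ z₂ y₁ y₂ : Fin d → ℝ)
    (hy₁ : y₁ ∈ Q) (hy₁max : ∀ y ∈ Q, dotp z₁ y - f y ≤ dotp z₁ y₁ - f y₁)
    (hy₂ : y₂ ∈ Q) (hy₂max : ∀ y ∈ Q, dotp z₂ y - f y ≤ dotp z₂ y₂ - f y₂) :
    N (y₁ - y₂) ≤ σ * dualNorm N (z₁ - z₂) ∧
    sSup ((fun y => dotp z₂ y - f y) '' Q) - sSup ((fun y => dotp z₁ y - f y) '' Q) -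
        dotp y₁ (z₂ - z₁) ≤
      (σ / 2) * dualNorm N (z₂ - z₁) ^ 2 := by
  have hN : IsNormFun N := ⟨hN0, hNsmul, hNtri⟩
  have hmax₁ : IsMaxOn (fun y => dotp z₁ y - f y) Q y₁ := hy₁max
  have hmax₂ : IsMaxOn (fun y => dotp z₂ y - f y) Q y₂ := hy₂max
  have h₁₂ := hstrong y₁ hy₁ y₂ hy₂ z₁ (add_dotp_sub_le_of_isMaxOn hmax₁)
  have h₂₁ := hstrong y₂ hy₂ y₁ hy₁ z₂ (add_dotp_sub_le_of_isMaxOn hmax₂)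
  constructor
  · refine le_mul_of_sq_le_mul (hN.nonneg _) hσ (dualNorm_nonneg hN _) ?_
    have hpair := dotp_le_dualNorm_mul hN (z₁ - z₂) (y₁ - y₂)
    have hhalf : 1 / σ * N (y₁ - y₂) ^ 2 = 2 * (1 / (2 * σ) * N (y₁ - y₂) ^ 2) := by ring
    rw [hN.map_sub_rev y₂] at h₁₂
    simp only [dotp_sub_left, dotp_sub_right] at h₁₂ h₂₁ hpair
    linarith
  · rw [hmax₁.csSup_image_eq hy₁, hmax₂.csSup_image_eq hy₂]
    have hpair := dotp_le_dualNorm_mul hN (z₂ - z₁) (y₂ - y₁)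
    have hyoung := mul_sub_sq_div_le (D := dualNorm N (z₂ - z₁)) (t := N (y₂ - y₁)) hσ
    rw [dotp_comm y₁]
    simp only [dotp_sub_left, dotp_sub_right] at h₁₂ hpair ⊢
    linarith

/-- **Strong convexity implies dual smoothness** (Theorem 2.1 of the paper): if
`f : Q → ℝ` is `(1/σ)`-strongly convex with respect to a norm `N`, and `y₁, y₂`
maximize `⟨z₁,·⟩ - f` and `⟨z₂,·⟩ - f` over `Q` respectively, then
`N(y₁-y₂) ≤ σ·N*(z₁-z₂)` and the Fenchel conjugate `f*` is `σ`-smooth with respect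
to the dual norm `N*`. -/
theorem strong_convexity_implies_dual_smoothness
    (d : ℕ) (Q : Set (Fin d → ℝ)) (hQne : Q.Nonempty) (hQconv : Convex ℝ Q)
    (N : (Fin d → ℝ) → ℝ)
    (hN0 : ∀ x, N x = 0 ↔ x = 0)
    (hNsmul : ∀ (a : ℝ) (x : Fin d → ℝ), N (a • x) = |a| * N x)
    (hNtri : ∀ x y, N (x + y) ≤ N x + N y)
    (σ : ℝ) (hσ : 0 < σ)
    (f : (Fin d → ℝ) → ℝ)
    (hstrong : ∀ x ∈ Q, ∀ y ∈ Q, ∀ g : Fin d → ℝ,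
      (∀ z ∈ Q, f x + dotp g (z - x) ≤ f z) →
      (1 / (2 * σ)) * N (y - x) ^ 2 ≤ f y - f x - dotp g (y - x))
    (z₁ z₂ y₁ y₂ : Fin d → ℝ)
    (hy₁ : y₁ ∈ Q) (hy₁max : ∀ y ∈ Q, dotp z₁ y - f y ≤ dotp z₁ y₁ - f y₁)
    (hy₂ : y₂ ∈ Q) (hy₂max : ∀ y ∈ Q, dotp z₂ y - f y ≤ dotp z₂ y₂ - f y₂) :
    N (y₁ - y₂) ≤ σ * dualNorm N (z₁ - z₂) ∧
    sSup ((fun y => dotp z₂ y - f y) '' Q) - sSup ((fun y => dotp z₁ y - f y) '' Q) -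
        dotp y₁ (z₂ - z₁) ≤
      (σ / 2) * dualNorm N (z₂ - z₁) ^ 2 :=
  strong_convexity_implies_dual_smoothness_general d Q N hN0 hNsmul hNtri σ hσ f hstrong z₁ z₂ y₁ y₂
    hy₁ hy₁max hy₂ hy₂max
end

section
/- Let M be a matroid on a finite ground set E of n elements with rank r ≥ 1, and suppose every base of M has exactly r elements. Let x* ∈ ℝ^E lie in the convex hull of the characteristic (0/1 indicator) vectors of the bases of M. Then for every real p ≥ 2 and ε > 0, there exist a positive integer k ≤ ⌈4(p−1)·r^{2/p}/ε²⌉ and bases B₁, …, B_k of M (with repetitions allowed) such that ‖(1/k)·Σ_{t=1}^{k} 𝟙_{B_t} − x*‖_p ≤ ε; equivalently, there is a probability distribution over bases of M supported on at most ⌈4(p−1)·r^{2/p}/ε²⌉ bases whose expected indicator vector is within ε of x* in ℓ_p norm. -/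
/-!
Write `x = ∑ᵢ wᵢ 𝟙_{Bᵢ}` and draw `k` bases independently from the law `w`. In each coordinate
`e`, the error of the empirical average is `1/k` times a sum of `k` i.i.d. mean-zero variables
`Yₜ` with `|Yₜ| ≤ 1`, so `E|Y|^p ≤ Var Y ≤ x_e`. For `p ≥ 2`, a second-order Taylor bound for
`|·|^p` followed by Hölder and Minkowski gives `E|s + Y|^p ≤ (s² + 4(p-1)‖Y‖_p²)^{p/2}`, and
induction on `k` yields `‖Y₁ + ⋯ + Y_k‖_p² ≤ 4(p-1) k ‖Y‖_p²`. Summing over coordinates, with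
`∑ₑ x_e = r`, the expected `p`-th power of the `ℓ_p` error is at most `(4(p-1)/k)^{p/2} r`,
which is `≤ ε^p` for the chosen `k`; some sample does at least as well as the expectation.
-/

open Finset
open scoped Classical

lemma exists_rpow_sub_rpow_eq {q a b : ℝ} (hq : 1 ≤ q) (hab : a < b) :
    ∃ c ∈ Set.Ioo a b, b ^ q - a ^ q = q * c ^ (q - 1) * (b - a) := by
  obtain ⟨c, hc, hc_eq⟩ := exists_hasDerivAt_eq_slope (fun x : ℝ => x ^ q)
    (fun x => q * x ^ (q - 1)) hab
    (fun x _ => (Real.continuousAt_rpow_const x q (Or.inr (by linarith))).continuousWithinAt)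
    (fun x _ => Real.hasDerivAt_rpow_const (Or.inr hq))
  exact ⟨c, hc, by rw [hc_eq, div_mul_cancel₀ _ (sub_ne_zero.mpr hab.ne')]⟩

lemma mul_rpow_sub_one_mul_le_rpow_sub_rpow {q a b : ℝ} (hq : 1 ≤ q) (ha : 0 ≤ a)
    (hab : a ≤ b) : q * a ^ (q - 1) * (b - a) ≤ b ^ q - a ^ q := by
  rcases hab.eq_or_lt with rfl | hab
  · simp
  obtain ⟨c, hc, hc_eq⟩ := exists_rpow_sub_rpow_eq hq hab
  rw [hc_eq]
  have hca : a ^ (q - 1) ≤ c ^ (q - 1) := Real.rpow_le_rpow ha hc.1.le (by linarith)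
  have : 0 ≤ b - a := by linarith
  have : 0 ≤ q := by linarith
  gcongr

lemma rpow_sub_rpow_le_mul_rpow_sub_one_mul {q a b : ℝ} (hq : 1 ≤ q) (ha : 0 ≤ a)
    (hab : a ≤ b) : b ^ q - a ^ q ≤ q * b ^ (q - 1) * (b - a) := by
  rcases hab.eq_or_lt with rfl | hab
  · simp
  obtain ⟨c, hc, hc_eq⟩ := exists_rpow_sub_rpow_eq hq hab
  rw [hc_eq]
  have hcb : c ^ (q - 1) ≤ b ^ (q - 1) :=
    Real.rpow_le_rpow (ha.trans hc.1.le) hc.2.le (by linarith)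
  have : 0 ≤ b - a := by linarith
  have : 0 ≤ q := by linarith
  gcongr

lemma sq_rpow_div_two {x : ℝ} (hx : 0 ≤ x) (p : ℝ) : (x ^ 2) ^ (p / 2) = x ^ p := by
  rw [← Real.rpow_natCast, ← Real.rpow_mul hx]
  congr 1
  ring

lemma rpow_eq_rpow_sub_two_mul_sq {x p : ℝ} (hx : 0 ≤ x) (hp : p ≠ 0) :
    x ^ p = x ^ (p - 2) * x ^ 2 := by
  rw [← Real.rpow_natCast, ← Real.rpow_add' hx (by simpa using hp)]
  norm_num

lemma rpow_eq_rpow_sub_two_mul_self {x p : ℝ} (hx : 0 ≤ x) (hp : p ≠ 1) :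
    x ^ (p - 1) = x ^ (p - 2) * x := by
  conv_rhs => enter [2]; rw [← Real.rpow_one x]
  rw [← Real.rpow_add' hx (by contrapose! hp; linarith)]
  ring_nf

lemma nonneg_of_hasDerivAt_of_sign {f f' : ℝ → ℝ} {y : ℝ}
    (hf : ∀ u, HasDerivAt f (f' u) u) (h0 : f 0 = 0)
    (hpos : ∀ u, 0 < u → u < y → 0 ≤ f' u) (hneg : ∀ u, y < u → u < 0 → f' u ≤ 0) :
    0 ≤ f y := by
  have hcont : ContinuousOn f (Set.uIcc 0 y) :=
    fun u _ => (hf u).continuousAt.continuousWithinAt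
  rcases le_total 0 y with hy | hy
  · rw [Set.uIcc_of_le hy] at hcont
    have hmono := monotoneOn_of_hasDerivWithinAt_nonneg (convex_Icc 0 y) hcont
      (fun u _ => (hf u).hasDerivWithinAt)
      (fun u hu => by rw [interior_Icc] at hu; exact hpos u hu.1 hu.2)
    simpa [h0] using hmono (Set.left_mem_Icc.2 hy) (Set.right_mem_Icc.2 hy) hy
  · rw [Set.uIcc_of_ge hy] at hcont
    have hanti := antitoneOn_of_hasDerivWithinAt_nonpos (convex_Icc y 0) hcont
      (fun u _ => (hf u).hasDerivWithinAt)
      (fun u hu => by rw [interior_Icc] at hu; exact hneg u hu.1 hu.2)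
    simpa [h0] using hanti (Set.left_mem_Icc.2 hy) (Set.right_mem_Icc.2 hy) hy

lemma add_rpow_le_taylor {p s y : ℝ} (hp : 2 ≤ p) (hs : 0 ≤ s) (hsy : 0 ≤ s + y) :
    (s + y) ^ p ≤ s ^ p + p * s ^ (p - 1) * y + p * (p - 1) / 2 * (s + |y|) ^ (p - 2) * y ^ 2 := by
  set M := s + |y|
  set ψ : ℝ → ℝ := fun u =>
    s ^ p + p * s ^ (p - 1) * u + p * (p - 1) / 2 * M ^ (p - 2) * u ^ 2 - (s + u) ^ p
  have hψ : ∀ u, HasDerivAt ψ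
      (p * s ^ (p - 1) + p * (p - 1) * M ^ (p - 2) * u - p * (s + u) ^ (p - 1)) u := by
    intro u
    have := ((((hasDerivAt_id u).const_mul (p * s ^ (p - 1))).const_add (s ^ p)).add
      ((hasDerivAt_pow 2 u).const_mul (p * (p - 1) / 2 * M ^ (p - 2)))).sub
      (((hasDerivAt_id u).const_add s).rpow_const (Or.inr (by linarith : 1 ≤ p)))
    exact this.congr_deriv (by simp only [id]; ring)
  have hq : 1 ≤ p - 1 := by linarith
  have hexp : p - 1 - 1 = p - 2 := by ring
  have key := nonneg_of_hasDerivAt_of_sign (y := y) hψ (by simp [ψ]) ?_ ?_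
  · simp only [ψ] at key
    linarith
  · intro u hu huy
    have h1 := rpow_sub_rpow_le_mul_rpow_sub_one_mul hq hs (by linarith : s ≤ s + u)
    have h2 : (s + u) ^ (p - 2) ≤ M ^ (p - 2) :=
      Real.rpow_le_rpow (by linarith) (by simp only [M]; linarith [le_abs_self y]) (by linarith)
    rw [hexp] at h1
    have h3 := mul_le_mul_of_nonneg_left h2 (by positivity : 0 ≤ p * (p - 1) * u)
    nlinarith
  · intro u hyu hu
    have h1 := rpow_sub_rpow_le_mul_rpow_sub_one_mul hq (by linarith) (by linarith : s + u ≤ s)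
    have h2 : s ^ (p - 2) ≤ M ^ (p - 2) :=
      Real.rpow_le_rpow hs (by simp only [M]; linarith [abs_nonneg y]) (by linarith)
    rw [hexp] at h1
    have h3 := mul_le_mul_of_nonneg_left h2
      (mul_nonneg (by nlinarith) (by linarith) : 0 ≤ p * (p - 1) * -u)
    nlinarith

lemma sub_rpow_le_taylor {p s z : ℝ} (hp : 2 ≤ p) (hs : 0 ≤ s) (hsz : s < z) :
    (z - s) ^ p ≤ s ^ p - p * s ^ (p - 1) * z + p * (p - 1) / 2 * (s + z) ^ (p - 2) * z ^ 2 := by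
  have hz : 0 < z := hs.trans_lt hsz
  have hp2 : 0 ≤ p - 2 := by linarith
  have hzs : (z - s) ^ p ≤ z ^ (p - 2) * (z - s) ^ 2 := by
    rw [rpow_eq_rpow_sub_two_mul_sq (p := p) (by linarith : 0 ≤ z - s) (by linarith)]
    gcongr
    linarith
  have hlin : p * s ^ (p - 1) * z - s ^ p ≤ z ^ (p - 2) * (p * s * z - s ^ 2) := by
    rw [rpow_eq_rpow_sub_two_mul_self (p := p) hs (by linarith),
      rpow_eq_rpow_sub_two_mul_sq (p := p) hs (by linarith)]
    have : s ^ (p - 2) ≤ z ^ (p - 2) := Real.rpow_le_rpow hs hsz.le hp2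
    have : 0 ≤ p * s * z - s ^ 2 := by
      nlinarith [mul_nonneg hs (sub_nonneg.2 hsz.le), mul_nonneg (mul_nonneg hs hz.le) hp2]
    calc p * (s ^ (p - 2) * s) * z - s ^ (p - 2) * s ^ 2
        = s ^ (p - 2) * (p * s * z - s ^ 2) := by ring
      _ ≤ z ^ (p - 2) * (p * s * z - s ^ 2) := by gcongr
  have hquad : (z - s) ^ 2 + (p * s * z - s ^ 2) ≤ p * (p - 1) / 2 * z ^ 2 := by
    nlinarith [mul_le_mul_of_nonneg_left hsz.le (mul_nonneg hp2 hz.le),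
      mul_nonneg (mul_nonneg (by linarith : 0 ≤ p - 1) hp2) (sq_nonneg z)]
  have hmono : z ^ (p - 2) ≤ (s + z) ^ (p - 2) := Real.rpow_le_rpow hz.le (by linarith) hp2
  have hz2 : 0 ≤ z ^ (p - 2) := Real.rpow_nonneg hz.le _
  nlinarith [mul_le_mul_of_nonneg_left hquad hz2,
    mul_le_mul_of_nonneg_right hmono
      (mul_nonneg (by nlinarith) (sq_nonneg z) : 0 ≤ p * (p - 1) / 2 * z ^ 2)]

lemma abs_add_rpow_le_taylor {p s : ℝ} (hp : 2 ≤ p) (hs : 0 ≤ s) (y : ℝ) :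
    |s + y| ^ p ≤ s ^ p + p * s ^ (p - 1) * y + p * (p - 1) / 2 * (s + |y|) ^ (p - 2) * y ^ 2 := by
  rcases le_or_gt 0 (s + y) with hsy | hsy
  · rw [abs_of_nonneg hsy]
    exact add_rpow_le_taylor hp hs hsy
  · have hy : y < 0 := by linarith
    have h := sub_rpow_le_taylor hp hs (z := -y) (by linarith)
    rw [neg_sq] at h
    rw [abs_of_neg hsy, abs_of_neg hy, show -(s + y) = -y - s by ring]
    linarith

lemma rpow_add_mul_rpow_add_half_le {q A B : ℝ} (hq : 1 ≤ q) (hA : 0 ≤ A) (hB : 0 ≤ B) :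
    A ^ q + q * (B / 2) * (A + B / 2) ^ (q - 1) ≤ (A + B) ^ q := by
  have h1 := mul_rpow_sub_one_mul_le_rpow_sub_rpow hq (by positivity : 0 ≤ A + B / 2)
    (by linarith : A + B / 2 ≤ A + B)
  have h2 : A ^ q ≤ (A + B / 2) ^ q := Real.rpow_le_rpow hA (by linarith) (by linarith)
  linarith

lemma one_add_inv_rpow_le_two {p : ℝ} (hp : 2 ≤ p) : (1 + (2 * (p - 1))⁻¹) ^ ((p - 2) / 2) ≤ 2 := by
  have hc : 0 < 2 * (p - 1) := by linarith
  calc (1 + (2 * (p - 1))⁻¹) ^ ((p - 2) / 2)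
      ≤ Real.exp (2 * (p - 1))⁻¹ ^ ((p - 2) / 2) := by
        refine Real.rpow_le_rpow (by positivity) ?_ (by linarith)
        linarith [Real.add_one_le_exp (2 * (p - 1))⁻¹]
    _ = Real.exp ((p - 2) / (4 * (p - 1))) := by
        rw [← Real.exp_mul]
        congr 1
        field_simp
        ring
    _ ≤ Real.exp (Real.log 2) := by
        gcongr
        rw [div_le_iff₀ (by linarith)]
        nlinarith [Real.log_two_gt_d9]
    _ = 2 := Real.exp_log two_pos

lemma add_rpow_sub_two_le {p s b : ℝ} (hp : 2 ≤ p) (hs : 0 ≤ s) (hb : 0 ≤ b) :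
    (s + b) ^ (p - 2) ≤ 2 * (s ^ 2 + 2 * (p - 1) * b ^ 2) ^ ((p - 2) / 2) := by
  set c := 2 * (p - 1)
  have hc : 0 < c := by simp only [c]; linarith
  -- Cauchy–Schwarz with weights `1` and `c`
  have hsq : (s + b) ^ 2 ≤ (1 + c⁻¹) * (s ^ 2 + c * b ^ 2) := by
    have : (1 + c⁻¹) * (s ^ 2 + c * b ^ 2) - (s + b) ^ 2 = (c * b - s) ^ 2 / c := by
      field_simp
      ring
    nlinarith [div_nonneg (sq_nonneg (c * b - s)) hc.le]
  calc (s + b) ^ (p - 2) = ((s + b) ^ 2) ^ ((p - 2) / 2) := (sq_rpow_div_two (by positivity) _).symm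
    _ ≤ ((1 + c⁻¹) * (s ^ 2 + c * b ^ 2)) ^ ((p - 2) / 2) := by
        gcongr
    _ = (1 + c⁻¹) ^ ((p - 2) / 2) * (s ^ 2 + c * b ^ 2) ^ ((p - 2) / 2) :=
        Real.mul_rpow (by positivity) (by positivity)
    _ ≤ 2 * (s ^ 2 + c * b ^ 2) ^ ((p - 2) / 2) := by
        gcongr
        exact one_add_inv_rpow_le_two hp

lemma rpow_add_taylor_remainder_le {p s b : ℝ} (hp : 2 ≤ p) (hs : 0 ≤ s) (hb : 0 ≤ b) :
    s ^ p + p * (p - 1) / 2 * (s + b) ^ (p - 2) * b ^ 2 ≤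
      (s ^ 2 + 4 * (p - 1) * b ^ 2) ^ (p / 2) := by
  have hp1 : 0 ≤ p - 1 := by linarith
  have h := rpow_add_mul_rpow_add_half_le (q := p / 2) (by linarith) (sq_nonneg s)
    (by positivity : 0 ≤ 4 * (p - 1) * b ^ 2)
  rw [sq_rpow_div_two hs, show p / 2 - 1 = (p - 2) / 2 by ring,
    show 4 * (p - 1) * b ^ 2 / 2 = 2 * (p - 1) * b ^ 2 by ring] at h
  have h2 := mul_le_mul_of_nonneg_left (add_rpow_sub_two_le hp hs hb)
    (by positivity : 0 ≤ p * (p - 1) / 2 * b ^ 2)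
  nlinarith

lemma rpow_one_div_mul_rpow {q a x : ℝ} (hq : q ≠ 0) (ha : 0 ≤ a) (hx : 0 ≤ x) :
    (a ^ (1 / q) * x) ^ q = a * x ^ q := by
  rw [Real.mul_rpow (Real.rpow_nonneg ha _) hx, ← Real.rpow_mul ha, one_div_mul_cancel hq,
    Real.rpow_one]

section WeightedSums

variable {ι : Type*} [Fintype ι] {w : ι → ℝ}

lemma weighted_Lp_add_le (hw : ∀ i, 0 ≤ w i) {q : ℝ} (hq : 1 ≤ q) {f g : ι → ℝ}
    (hf : ∀ i, 0 ≤ f i) (hg : ∀ i, 0 ≤ g i) :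
    (∑ i, w i * (f i + g i) ^ q) ^ (1 / q) ≤
      (∑ i, w i * f i ^ q) ^ (1 / q) + (∑ i, w i * g i ^ q) ^ (1 / q) := by
  have hq0 : q ≠ 0 := by positivity
  have h := Real.Lp_add_le_of_nonneg (s := univ) (f := fun i => w i ^ (1 / q) * f i)
    (g := fun i => w i ^ (1 / q) * g i) hq
    (fun i _ => mul_nonneg (Real.rpow_nonneg (hw i) _) (hf i))
    (fun i _ => mul_nonneg (Real.rpow_nonneg (hw i) _) (hg i))
  simpa only [← mul_add, rpow_one_div_mul_rpow hq0 (hw _) (hf _),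
    rpow_one_div_mul_rpow hq0 (hw _) (hg _),
    rpow_one_div_mul_rpow hq0 (hw _) (add_nonneg (hf _) (hg _))] using h

lemma weighted_inner_le_Lp_mul_Lq (hw : ∀ i, 0 ≤ w i) {a b : ℝ} (hab : a.HolderConjugate b)
    {f g : ι → ℝ} (hf : ∀ i, 0 ≤ f i) (hg : ∀ i, 0 ≤ g i) :
    ∑ i, w i * (f i * g i) ≤
      (∑ i, w i * f i ^ a) ^ (1 / a) * (∑ i, w i * g i ^ b) ^ (1 / b) := by
  have h := Real.inner_le_Lp_mul_Lq_of_nonneg univ hab (f := fun i => w i ^ (1 / a) * f i)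
    (g := fun i => w i ^ (1 / b) * g i)
    (fun i _ => mul_nonneg (Real.rpow_nonneg (hw i) _) (hf i))
    (fun i _ => mul_nonneg (Real.rpow_nonneg (hw i) _) (hg i))
  have hsplit : ∀ i, w i ^ (1 / a) * f i * (w i ^ (1 / b) * g i) = w i * (f i * g i) := by
    intro i
    rw [mul_mul_mul_comm, ← Real.rpow_add' (hw i) (by simp [hab.inv_add_inv_eq_one]),
      one_div, one_div, hab.inv_add_inv_eq_one, Real.rpow_one]
  simpa only [hsplit, rpow_one_div_mul_rpow hab.ne_zero (hw _) (hf _),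
    rpow_one_div_mul_rpow hab.symm.ne_zero (hw _) (hg _)] using h

lemma exists_le_of_sum_mul_le_s15 {W F : ι → ℝ} {A : ℝ} (hW0 : ∀ i, 0 ≤ W i) (hW1 : ∑ i, W i = 1)
    (h : ∑ i, W i * F i ≤ A) : ∃ i, F i ≤ A := by
  have hne : (univ : Finset ι).Nonempty := by
    by_contra hempty
    rw [not_nonempty_iff_eq_empty.mp hempty, sum_empty] at hW1
    exact zero_ne_one hW1
  obtain ⟨i, -, hi⟩ := exists_min_image univ F hne
  refine ⟨i, le_trans ?_ h⟩
  calc F i = ∑ j, W j * F i := by rw [← sum_mul, hW1, one_mul]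
    _ ≤ ∑ j, W j * F j :=
        sum_le_sum fun j _ => mul_le_mul_of_nonneg_left (hi j (mem_univ j)) (hW0 j)

lemma sum_mul_add_abs_rpow_sub_two_mul_sq_le {p s : ℝ} (hp : 2 ≤ p) (hs : 0 ≤ s)
    (hw0 : ∀ i, 0 ≤ w i) (hw1 : ∑ i, w i = 1) (Y : ι → ℝ) :
    ∑ i, w i * ((s + |Y i|) ^ (p - 2) * Y i ^ 2) ≤
      (s + (∑ i, w i * |Y i| ^ p) ^ (1 / p)) ^ (p - 2) *
        ((∑ i, w i * |Y i| ^ p) ^ (1 / p)) ^ 2 := by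
  set W := ∑ i, w i * |Y i| ^ p
  have hW : 0 ≤ W := sum_nonneg fun i _ => mul_nonneg (hw0 i) (by positivity)
  have hW2 : (W ^ (1 / p)) ^ 2 = W ^ (2 / p) := by
    rw [← Real.rpow_natCast, ← Real.rpow_mul hW]
    congr 1
    ring
  rw [hW2]
  rcases hp.eq_or_lt with rfl | hp2
  · norm_num [W]
  -- Hölder with exponents `p / (p - 2)` and `p / 2`, then Minkowski for `s + |Y|`
  have hp0 : 0 < p := by linarith
  have hconj : (p / (p - 2)).HolderConjugate (p / 2) := by
    rw [Real.holderConjugate_iff]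
    refine ⟨by rw [lt_div_iff₀ (by linarith)]; linarith, ?_⟩
    rw [inv_div, inv_div]
    field_simp
    ring
  have hHolder := weighted_inner_le_Lp_mul_Lq hw0 hconj
    (f := fun i => (s + |Y i|) ^ (p - 2)) (g := fun i => Y i ^ 2)
    (fun i => by positivity) (fun i => sq_nonneg _)
  have hf : ∀ i, ((s + |Y i|) ^ (p - 2)) ^ (p / (p - 2)) = (s + |Y i|) ^ p := fun i => by
    rw [← Real.rpow_mul (by positivity), mul_div_cancel₀ _ (by linarith)]
  have hg : ∀ i, (Y i ^ 2) ^ (p / 2) = |Y i| ^ p := fun i => by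
    rw [← sq_abs, sq_rpow_div_two (abs_nonneg _)]
  simp only [hf, hg, one_div_div] at hHolder
  have hMinkowski := weighted_Lp_add_le hw0 (q := p) (by linarith)
    (f := fun _ => s) (g := fun i => |Y i|) (fun _ => hs) (fun i => abs_nonneg _)
  rw [← sum_mul, hw1, one_mul, ← Real.rpow_mul hs, mul_one_div_cancel hp0.ne',
    Real.rpow_one] at hMinkowski
  set X := ∑ i, w i * (s + |Y i|) ^ p
  have hX : 0 ≤ X := sum_nonneg fun i _ => mul_nonneg (hw0 i) (by positivity)
  calc ∑ i, w i * ((s + |Y i|) ^ (p - 2) * Y i ^ 2)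
      ≤ X ^ ((p - 2) / p) * W ^ (2 / p) := hHolder
    _ = (X ^ (1 / p)) ^ (p - 2) * W ^ (2 / p) := by
        rw [← Real.rpow_mul hX, one_div_mul_eq_div]
    _ ≤ (s + W ^ (1 / p)) ^ (p - 2) * W ^ (2 / p) := by gcongr

lemma sum_mul_abs_add_rpow_le_of_nonneg {p s : ℝ} (hp : 2 ≤ p) (hs : 0 ≤ s)
    (hw0 : ∀ i, 0 ≤ w i) (hw1 : ∑ i, w i = 1) {Y : ι → ℝ} (hY : ∑ i, w i * Y i = 0) :
    ∑ i, w i * |s + Y i| ^ p ≤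
      (s ^ 2 + 4 * (p - 1) * (∑ i, w i * |Y i| ^ p) ^ (2 / p)) ^ (p / 2) := by
  set W := ∑ i, w i * |Y i| ^ p
  have hW : 0 ≤ W := sum_nonneg fun i _ => mul_nonneg (hw0 i) (by positivity)
  have hb2 : W ^ (2 / p) = (W ^ (1 / p)) ^ 2 := by
    rw [← Real.rpow_natCast, ← Real.rpow_mul hW]
    congr 1
    ring
  have hp1 : 0 ≤ p * (p - 1) / 2 := by nlinarith
  have hT := mul_le_mul_of_nonneg_left (sum_mul_add_abs_rpow_sub_two_mul_sq_le hp hs hw0 hw1 Y) hp1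
  have hscalar := rpow_add_taylor_remainder_le hp hs (Real.rpow_nonneg hW (1 / p))
  rw [hb2]
  -- the first-order term of the Taylor expansion averages to zero
  calc ∑ i, w i * |s + Y i| ^ p
      ≤ ∑ i, w i * (s ^ p + p * s ^ (p - 1) * Y i +
          p * (p - 1) / 2 * (s + |Y i|) ^ (p - 2) * Y i ^ 2) :=
        sum_le_sum fun i _ => mul_le_mul_of_nonneg_left (abs_add_rpow_le_taylor hp hs (Y i)) (hw0 i)
    _ = s ^ p * ∑ i, w i + p * s ^ (p - 1) * ∑ i, w i * Y i +
          p * (p - 1) / 2 * ∑ i, w i * ((s + |Y i|) ^ (p - 2) * Y i ^ 2) := by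
        simp only [mul_sum, ← sum_add_distrib]
        exact sum_congr rfl fun i _ => by ring
    _ ≤ _ := by
        rw [hw1, hY]
        linarith

lemma sum_mul_abs_add_rpow_le {p : ℝ} (hp : 2 ≤ p) (hw0 : ∀ i, 0 ≤ w i) (hw1 : ∑ i, w i = 1)
    {Y : ι → ℝ} (hY : ∑ i, w i * Y i = 0) (s : ℝ) :
    ∑ i, w i * |s + Y i| ^ p ≤
      (s ^ 2 + 4 * (p - 1) * (∑ i, w i * |Y i| ^ p) ^ (2 / p)) ^ (p / 2) := by
  rcases le_total 0 s with hs | hs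
  · exact sum_mul_abs_add_rpow_le_of_nonneg hp hs hw0 hw1 hY
  · have hY' : ∑ i, w i * -Y i = 0 := by simp [hY]
    have h := sum_mul_abs_add_rpow_le_of_nonneg hp (neg_nonneg.2 hs) hw0 hw1 hY'
    simpa only [← neg_add, abs_neg, neg_sq] using h

lemma sum_pi_fin_succ {m : ℕ} (F : (Fin (m + 1) → ι) → ℝ) :
    ∑ ω, F ω = ∑ ω : Fin m → ι, ∑ i, F (Fin.cons i ω) := by
  rw [← (Fin.consEquiv fun _ => ι).sum_comp, Fintype.sum_prod_type, sum_comm]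
  rfl

lemma sum_prod_apply_eq_one (hw1 : ∑ i, w i = 1) (m : ℕ) :
    ∑ ω : Fin m → ι, ∏ t, w (ω t) = 1 := by
  rw [← Fintype.sum_pow, hw1, one_pow]

/-- The weights `∏ t, w (ω t)` on `Fin m → ι` are the law of `m` i.i.d. samples of law `w`, so this
reads `‖Y₁ + ⋯ + Y_m‖_p² ≤ 4 (p - 1) m ‖Y‖_p²` for i.i.d. mean-zero `Yₜ`. -/
theorem sum_prod_mul_abs_sum_rpow_le {p : ℝ} (hp : 2 ≤ p) (hw0 : ∀ i, 0 ≤ w i)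
    (hw1 : ∑ i, w i = 1) {Y : ι → ℝ} (hY : ∑ i, w i * Y i = 0) (m : ℕ) :
    (∑ ω : Fin m → ι, (∏ t, w (ω t)) * |∑ t, Y (ω t)| ^ p) ^ (2 / p) ≤
      4 * (p - 1) * m * (∑ i, w i * |Y i| ^ p) ^ (2 / p) := by
  have hp0 : 0 < p := by linarith
  set c := 4 * (p - 1) * (∑ i, w i * |Y i| ^ p) ^ (2 / p) with hc_def
  have hc : 0 ≤ c := mul_nonneg (by linarith) (Real.rpow_nonneg
    (sum_nonneg fun i _ => mul_nonneg (hw0 i) (by positivity)) _)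
  suffices h : (∑ ω : Fin m → ι, (∏ t, w (ω t)) * |∑ t, Y (ω t)| ^ p) ^ (2 / p) ≤ m * c by
    linarith
  induction m with
  | zero => simp [Real.zero_rpow hp0.ne', Real.zero_rpow (div_pos two_pos hp0).ne']
  | succ m ih =>
    set P : (Fin m → ι) → ℝ := fun ω => ∏ t, w (ω t)
    set S : (Fin m → ι) → ℝ := fun ω => ∑ t, Y (ω t)
    have hP : ∀ ω, 0 ≤ P ω := fun ω => prod_nonneg fun t _ => hw0 _
    have hsplit : ∑ ω : Fin (m + 1) → ι, (∏ t, w (ω t)) * |∑ t, Y (ω t)| ^ p =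
        ∑ ω, P ω * ∑ i, w i * |S ω + Y i| ^ p := by
      rw [sum_pi_fin_succ]
      refine sum_congr rfl fun ω _ => ?_
      rw [mul_sum]
      refine sum_congr rfl fun i _ => ?_
      simp only [P, S, Fin.prod_univ_succ, Fin.sum_univ_succ, Fin.cons_zero, Fin.cons_succ]
      ring_nf
    have hstep : ∑ ω, P ω * ∑ i, w i * |S ω + Y i| ^ p ≤ ∑ ω, P ω * (S ω ^ 2 + c) ^ (p / 2) :=
      sum_le_sum fun ω _ =>
        mul_le_mul_of_nonneg_left (sum_mul_abs_add_rpow_le hp hw0 hw1 hY _) (hP ω)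
    -- Minkowski in `L^{p/2}` for `S² + c`
    have hMinkowski := weighted_Lp_add_le hP (q := p / 2) (by linarith)
      (f := fun ω => S ω ^ 2) (g := fun _ => c) (fun ω => sq_nonneg _) (fun _ => hc)
    simp only [one_div_div] at hMinkowski
    rw [← sum_mul, sum_prod_apply_eq_one hw1, one_mul, ← Real.rpow_mul hc,
      show p / 2 * (2 / p) = 1 by field_simp, Real.rpow_one] at hMinkowski
    have hSp : ∀ ω, (S ω ^ 2) ^ (p / 2) = |S ω| ^ p := fun ω => by
      rw [← sq_abs, sq_rpow_div_two (abs_nonneg _)]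
    simp only [hSp] at hMinkowski
    rw [hsplit]
    calc (∑ ω, P ω * ∑ i, w i * |S ω + Y i| ^ p) ^ (2 / p)
        ≤ (∑ ω, P ω * (S ω ^ 2 + c) ^ (p / 2)) ^ (2 / p) :=
          Real.rpow_le_rpow (sum_nonneg fun ω _ => mul_nonneg (hP ω)
            (sum_nonneg fun i _ => mul_nonneg (hw0 i) (by positivity))) hstep (by positivity)
      _ ≤ (∑ ω, P ω * |S ω| ^ p) ^ (2 / p) + c := hMinkowski
      _ ≤ m * c + c := by gcongr
      _ = (m + 1 : ℕ) * c := by push_cast; ring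

lemma abs_rpow_le_sq {a p : ℝ} (hp : 2 ≤ p) (ha : |a| ≤ 1) : |a| ^ p ≤ a ^ 2 := by
  calc |a| ^ p ≤ |a| ^ (2 : ℝ) := Real.rpow_le_rpow_of_exponent_ge' (abs_nonneg a) ha two_pos.le hp
    _ = a ^ 2 := by rw [Real.rpow_two, sq_abs]

lemma sum_mul_abs_sub_rpow_le_of_mem_Icc {p : ℝ} (hp : 2 ≤ p) (hw0 : ∀ i, 0 ≤ w i)
    (hw1 : ∑ i, w i = 1) {v : ι → ℝ} (hv : ∀ i, v i ∈ Set.Icc (0 : ℝ) 1) :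
    ∑ i, w i * |v i - ∑ j, w j * v j| ^ p ≤ ∑ j, w j * v j := by
  set x := ∑ j, w j * v j
  have hx0 : 0 ≤ x := sum_nonneg fun j _ => mul_nonneg (hw0 j) (hv j).1
  have hx1 : x ≤ 1 := by
    rw [← hw1]
    exact sum_le_sum fun j _ => mul_le_of_le_one_right (hw0 j) (hv j).2
  calc ∑ i, w i * |v i - x| ^ p
      ≤ ∑ i, w i * (v i - x) ^ 2 := sum_le_sum fun i _ => mul_le_mul_of_nonneg_left
        (abs_rpow_le_sq hp (abs_le.2 ⟨by linarith [(hv i).1], by linarith [(hv i).2]⟩)) (hw0 i)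
    _ = ∑ i, (w i * v i ^ 2 - 2 * x * (w i * v i) + x ^ 2 * w i) :=
        sum_congr rfl fun i _ => by ring
    _ = ∑ i, w i * v i ^ 2 - x ^ 2 := by
        rw [sum_add_distrib, sum_sub_distrib, ← mul_sum, ← mul_sum, hw1]
        ring
    _ ≤ x - x ^ 2 := by
        gcongr
        exact sum_le_sum fun i _ => mul_le_mul_of_nonneg_left
          (by nlinarith [(hv i).1, (hv i).2] : v i ^ 2 ≤ v i) (hw0 i)
    _ ≤ x := by nlinarith

/-- Maurey's empirical method, in `ℓ_p`. -/
theorem exists_sample_sum_abs_sub_rpow_le {α : Type*} [Fintype α] {p : ℝ} (hp : 2 ≤ p)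
    (hw0 : ∀ i, 0 ≤ w i) (hw1 : ∑ i, w i = 1) {v : ι → α → ℝ}
    (hv : ∀ i e, v i e ∈ Set.Icc (0 : ℝ) 1) {k : ℕ} (hk : 0 < k) :
    ∃ ω : Fin k → ι, ∑ e, |1 / (k : ℝ) * ∑ t, v (ω t) e - ∑ i, w i * v i e| ^ p ≤
      (4 * (p - 1) / k) ^ (p / 2) * ∑ e, ∑ i, w i * v i e := by
  have hp0 : 0 < p := by linarith
  have hk0 : (0 : ℝ) < k := Nat.cast_pos.2 hk
  refine exists_le_of_sum_mul_le_s15 (fun ω => prod_nonneg fun t _ => hw0 (ω t))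
    (sum_prod_apply_eq_one hw1 k) ?_
  have hcoord : ∀ e, ∑ ω : Fin k → ι, (∏ t, w (ω t)) *
      |1 / (k : ℝ) * ∑ t, v (ω t) e - ∑ i, w i * v i e| ^ p ≤
        (4 * (p - 1) / k) ^ (p / 2) * ∑ i, w i * v i e := by
    intro e
    set x := ∑ i, w i * v i e
    set Y : ι → ℝ := fun i => v i e - x
    have hY : ∑ i, w i * Y i = 0 := by
      simp only [Y, mul_sub, sum_sub_distrib, ← sum_mul, hw1, one_mul, x, sub_self]
    have hmean : ∀ ω : Fin k → ι, 1 / (k : ℝ) * ∑ t, v (ω t) e - x = 1 / k * ∑ t, Y (ω t) := by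
      intro ω
      simp only [Y, sum_sub_distrib, sum_const, card_univ, Fintype.card_fin, nsmul_eq_mul]
      field_simp
    set A := ∑ ω : Fin k → ι, (∏ t, w (ω t)) * |∑ t, Y (ω t)| ^ p
    set V := ∑ i, w i * |Y i| ^ p
    have hA : 0 ≤ A :=
      sum_nonneg fun ω _ => mul_nonneg (prod_nonneg fun t _ => hw0 _) (by positivity)
    have hV : 0 ≤ V := sum_nonneg fun i _ => mul_nonneg (hw0 i) (by positivity)
    have hc : 0 ≤ 4 * (p - 1) * k := mul_nonneg (by linarith) hk0.le
    have hAV : A ≤ (4 * (p - 1) * k) ^ (p / 2) * V := by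
      have h := Real.rpow_le_rpow (Real.rpow_nonneg hA _)
        (sum_prod_mul_abs_sum_rpow_le hp hw0 hw1 hY k) (by positivity : 0 ≤ p / 2)
      rwa [← Real.rpow_mul hA, Real.mul_rpow (by positivity) (Real.rpow_nonneg hV _),
        ← Real.rpow_mul hV, show 2 / p * (p / 2) = 1 by field_simp, Real.rpow_one,
        Real.rpow_one] at h
    have hVx : V ≤ x := sum_mul_abs_sub_rpow_le_of_mem_Icc hp hw0 hw1 (fun i => hv i e)
    calc ∑ ω : Fin k → ι, (∏ t, w (ω t)) * |1 / (k : ℝ) * ∑ t, v (ω t) e - x| ^ p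
        = (1 / k) ^ p * A := by
          rw [mul_sum]
          refine sum_congr rfl fun ω _ => ?_
          rw [hmean, abs_mul, Real.mul_rpow (abs_nonneg _) (abs_nonneg _),
            abs_of_pos (by positivity : (0 : ℝ) < 1 / k)]
          ring
      _ ≤ (1 / k) ^ p * ((4 * (p - 1) * k) ^ (p / 2) * x) := by
          have := Real.rpow_nonneg hc (p / 2)
          gcongr
          exact hAV.trans (by gcongr)
      _ = (4 * (p - 1) / k) ^ (p / 2) * x := by
          rw [← sq_rpow_div_two (by positivity : (0 : ℝ) ≤ 1 / k), ← mul_assoc,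
            ← Real.mul_rpow (by positivity) hc]
          congr 2
          field_simp
  calc ∑ ω : Fin k → ι, (∏ t, w (ω t)) *
        ∑ e, |1 / (k : ℝ) * ∑ t, v (ω t) e - ∑ i, w i * v i e| ^ p
      = ∑ e, ∑ ω : Fin k → ι, (∏ t, w (ω t)) *
          |1 / (k : ℝ) * ∑ t, v (ω t) e - ∑ i, w i * v i e| ^ p := by
        simp only [mul_sum]
        exact sum_comm
    _ ≤ ∑ e, (4 * (p - 1) / k) ^ (p / 2) * ∑ i, w i * v i e := sum_le_sum fun e _ => hcoord e
    _ = _ := (mul_sum _ _ _).symm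

end WeightedSums

lemma lpNorm_le_of_sum_rpow_le {ι : Type*} [Fintype ι] {p ε : ℝ} (hp : 0 < p) (hε : 0 ≤ ε)
    {x : ι → ℝ} (h : ∑ j, |x j| ^ p ≤ ε ^ p) : lpNorm p x ≤ ε := by
  calc lpNorm p x ≤ (ε ^ p) ^ (1 / p) :=
        Real.rpow_le_rpow (sum_nonneg fun j _ => by positivity) h (by positivity)
    _ = ε := by rw [← Real.rpow_mul hε, mul_one_div_cancel hp.ne', Real.rpow_one]

lemma div_rpow_mul_le_of_le {p c r ε k : ℝ} (hp : 0 < p) (hc : 0 ≤ c) (hr : 0 < r) (hε : 0 < ε)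
    (hk : 0 < k) (hck : c * r ^ (2 / p) / ε ^ 2 ≤ k) : (c / k) ^ (p / 2) * r ≤ ε ^ p := by
  have hrp : 0 < r ^ (2 / p) := by positivity
  have h : c / k ≤ ε ^ 2 / r ^ (2 / p) := by
    rw [div_le_iff₀ (by positivity)] at hck
    rw [div_le_div_iff₀ hk hrp]
    linarith
  calc (c / k) ^ (p / 2) * r ≤ (ε ^ 2 / r ^ (2 / p)) ^ (p / 2) * r := by gcongr
    _ = ε ^ p := by
        rw [Real.div_rpow (by positivity) hrp.le, sq_rpow_div_two hε.le, ← Real.rpow_mul hr.le,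
          show 2 / p * (p / 2) = 1 by field_simp, Real.rpow_one, div_mul_cancel₀ _ hr.ne']

lemma sum_ite_mem_eq_ncard {α : Type*} [Fintype α] (S : Set α) :
    ∑ e, (if e ∈ S then (1 : ℝ) else 0) = S.ncard := by
  rw [sum_boole, Set.ncard_eq_toFinset_card']
  congr 2
  ext e
  simp

theorem matroid_base_rounding_general
    (α : Type) [Fintype α]
    (M : Matroid α)
    (r : ℕ) (hr : 1 ≤ r) (hrank : ∀ B, M.IsBase B → B.ncard = r)
    (x : α → ℝ)
    (hx : x ∈ convexHull ℝ
      {v : α → ℝ | ∃ B, M.IsBase B ∧ v = fun e => if e ∈ B then (1 : ℝ) else 0})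
    (p : ℝ) (hp : 2 ≤ p) (ε : ℝ) (hε : 0 < ε) :
    ∃ k : ℕ, 0 < k ∧ k ≤ ⌈4 * (p - 1) * (r : ℝ) ^ ((2 : ℝ) / p) / ε ^ 2⌉₊ ∧
      ∃ B : Fin k → Set α, (∀ t, M.IsBase (B t)) ∧
        lpNorm p (fun e : α =>
          (1 / (k : ℝ)) * (∑ t, if e ∈ B t then (1 : ℝ) else 0) - x e) ≤ ε := by
  obtain ⟨ι, _, w, z, hw0, hw1, hz, rfl⟩ := mem_convexHull_iff_exists_fintype.mp hx
  choose B hB hzB using hz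
  have hr0 : (0 : ℝ) < r := by exact_mod_cast hr
  set k := ⌈4 * (p - 1) * (r : ℝ) ^ ((2 : ℝ) / p) / ε ^ 2⌉₊
  have hp1 : 0 < p - 1 := by linarith
  have hk : 0 < k := Nat.ceil_pos.2 (by positivity)
  obtain ⟨ω, hω⟩ := exists_sample_sum_abs_sub_rpow_le hp hw0 hw1 (v := z)
    (fun i e => by rw [hzB i]; dsimp only; split_ifs <;> simp) hk
  have hmass : ∑ e, ∑ i, w i * z i e = r := by
    rw [sum_comm]
    simp only [← mul_sum, hzB, sum_ite_mem_eq_ncard, hrank _ (hB _), ← sum_mul, hw1, one_mul]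
  refine ⟨k, hk, le_rfl, B ∘ ω, fun t => hB _, lpNorm_le_of_sum_rpow_le (by linarith) hε.le ?_⟩
  calc _ = ∑ e, |1 / (k : ℝ) * ∑ t, z (ω t) e - ∑ i, w i * z i e| ^ p := by
        simp [hzB, Finset.sum_apply]
    _ ≤ (4 * (p - 1) / k) ^ (p / 2) * r := hω.trans_eq (by rw [hmass])
    _ ≤ ε ^ p := div_rpow_mul_le_of_le (by linarith) (by positivity) hr0 hε
        (Nat.cast_pos.2 hk) (Nat.le_ceil _)

/-- **Fast rounding in the matroid base polytope** (Proposition 5.1 of the paper):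
any point `x*` of the base polytope of a matroid of rank `r` is within `ε` in ℓ_p norm
of the average of at most `⌈4(p-1)·r^{2/p}/ε²⌉` base indicator vectors, i.e. there is a
sparsely supported distribution over bases whose expectation approximates `x*`. -/
theorem matroid_base_rounding
    (α : Type) [Fintype α] [DecidableEq α]
    (M : Matroid α) (hground : M.E = Set.univ)
    (r : ℕ) (hr : 1 ≤ r) (hrank : ∀ B, M.IsBase B → B.ncard = r)
    (x : α → ℝ)
    (hx : x ∈ convexHull ℝ
      {v : α → ℝ | ∃ B, M.IsBase B ∧ v = fun e => if e ∈ B then (1 : ℝ) else 0})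
    (p : ℝ) (hp : 2 ≤ p) (ε : ℝ) (hε : 0 < ε) :
    ∃ k : ℕ, 0 < k ∧ k ≤ ⌈4 * (p - 1) * (r : ℝ) ^ ((2 : ℝ) / p) / ε ^ 2⌉₊ ∧
      ∃ B : Fin k → Set α, (∀ t, M.IsBase (B t)) ∧
        lpNorm p (fun e : α =>
          (1 / (k : ℝ)) * (∑ t, if e ∈ B t then (1 : ℝ) else 0) - x e) ≤ ε :=
  matroid_base_rounding_general α M r hr hrank x hx p hp ε hε
end

section
/- Let n be a positive integer and let f : 2^{[n]} → ℝ be a submodular function with f(∅) = 0, i.e. f(S) + f(T) ≥ f(S ∪ T) + f(S ∩ T) for all S, T ⊆ [n]. Define the base polyhedron B_f = {x ∈ ℝ^n : Σ_{i∈A} xᵢ ≤ f(A) for all A ⊆ [n], and Σ_{i∈[n]} xᵢ = f([n])}. Let c ∈ ℝ^n satisfy c₁ ≤ c₂ ≤ … ≤ cₙ, and define q ∈ ℝ^n by qᵢ = f({1,…,i}) − f({1,…,i−1}) for each i. Then q ∈ B_f and ⟨c, q⟩ = min{⟨c, x⟩ : x ∈ B_f}; that is, the greedy vector q solves the linear optimization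 problem over the base polyhedron. -/
/-!
Feasibility: for a finset `s` with largest element `a`, submodularity applied to `s` and
`Iio a` bounds the greedy increment `f (Iic a) - f (Iio a)` by `f s - f (s.erase a)`, so
the greedy sums are bounded by `f` by induction on `s`; on the lower sets `Iic j` and `univ`
they telescope to equality. Optimality: for `x` in the base polyhedron the difference
`d = x - q` has nonpositive prefix sums and total sum zero, so Abel summation against the
monotone weights `c` gives `⟨c, d⟩ ≥ 0`.
-/

open Finset

def Submodular {α β : Type*} [DecidableEq α] [Add β] [LE β] (f : Finset α → β) : Prop :=
  ∀ S T : Finset α, f (S ∪ T) + f (S ∩ T) ≤ f S + f T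

def basePolyhedron {α β : Type*} [Fintype α] [AddCommMonoid β] [LE β]
    (f : Finset α → β) : Set (α → β) :=
  {x | (∀ A : Finset α, ∑ i ∈ A, x i ≤ f A) ∧ ∑ i, x i = f univ}

variable {α : Type*} [LinearOrder α] [LocallyFiniteOrderBot α]

def greedyVector {β : Type*} [Sub β] (f : Finset α → β) (i : α) : β :=
  f (Iic i) - f (Iio i)

lemma eq_Iio_of_isLowerSet_insert {a : α} {s : Finset α} (hs : ∀ x ∈ s, x < a)
    (h : IsLowerSet (↑(insert a s) : Set α)) : s = Iio a := by
  ext x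
  refine ⟨fun hx => mem_Iio.2 (hs x hx), fun hx => ?_⟩
  have hx' : x ∈ insert a s := h (mem_Iio.1 hx).le (by simp)
  exact (mem_insert.1 hx').resolve_left (mem_Iio.1 hx).ne

section Greedy

variable {β : Type*} [AddCommGroup β]

theorem sum_greedyVector_of_isLowerSet (f : Finset α → β) {s : Finset α}
    (hs : IsLowerSet (s : Set α)) : ∑ i ∈ s, greedyVector f i = f s - f ∅ := by
  induction s using Finset.induction_on_max with
  | empty => simp
  | insert a s hlt ih =>
    obtain rfl := eq_Iio_of_isLowerSet_insert hlt hs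
    rw [sum_insert (by simp), ih (by simpa using isLowerSet_Iio a), Iio_insert, greedyVector]
    abel

variable [PartialOrder β] [IsOrderedAddMonoid β]

theorem sum_greedyVector_le {f : Finset α → β} (hf : Submodular f) (s : Finset α) :
    ∑ i ∈ s, greedyVector f i ≤ f s - f ∅ := by
  induction s using Finset.induction_on_max with
  | empty => simp
  | insert a s hlt ih =>
    have hunion : insert a s ∪ Iio a = Iic a := by
      rw [insert_union, union_eq_right.2 fun x hx => mem_Iio.2 (hlt x hx), Iio_insert]
    have hinter : insert a s ∩ Iio a = s := by
      rw [insert_inter_of_notMem (by simp), inter_eq_left.2 fun x hx => mem_Iio.2 (hlt x hx)]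
    have hsub := hf (insert a s) (Iio a)
    rw [hunion, hinter] at hsub
    rw [sum_insert fun ha => (hlt a ha).false]
    calc greedyVector f a + ∑ i ∈ s, greedyVector f i
        ≤ f (Iic a) - f (Iio a) + (f s - f ∅) := add_le_add_right ih _
      _ = f (Iic a) + f s - f (Iio a) - f ∅ := by abel
      _ ≤ f (insert a s) + f (Iio a) - f (Iio a) - f ∅ := by gcongr
      _ = f (insert a s) - f ∅ := by abel

theorem greedyVector_mem_basePolyhedron [Fintype α] {f : Finset α → β} (hf : Submodular f)
    (hf0 : f ∅ = 0) : greedyVector f ∈ basePolyhedron f := by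
  refine ⟨fun A => ?_, ?_⟩
  · simpa [hf0] using sum_greedyVector_le hf A
  · simpa [hf0] using sum_greedyVector_of_isLowerSet f (s := univ) (by simpa using isLowerSet_univ)

end Greedy

section Optimality

variable {R : Type*} [Ring R] [PartialOrder R] [IsOrderedRing R]

theorem mul_sum_le_sum_mul_of_isLowerSet {c d : α → R} (hc : Monotone c)
    (hd : ∀ j, ∑ i ∈ Iic j, d i ≤ 0) {s : Finset α} (hs : IsLowerSet (s : Set α)) {b : α}
    (hb : ∀ i ∈ s, i ≤ b) : c b * ∑ i ∈ s, d i ≤ ∑ i ∈ s, c i * d i := by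
  induction s using Finset.induction_on_max generalizing b with
  | empty => simp
  | insert a s hlt ih =>
    obtain rfl := eq_Iio_of_isLowerSet_insert hlt hs
    have ih' := ih (by simpa using isLowerSet_Iio a) (b := a) fun i hi => (mem_Iio.1 hi).le
    rw [Iio_insert] at hb ⊢
    rw [← Iio_insert, sum_insert (by simp), sum_insert (by simp)]
    calc c b * (d a + ∑ i ∈ Iio a, d i)
        ≤ c a * (d a + ∑ i ∈ Iio a, d i) := by
          refine mul_le_mul_of_nonpos_right (hc (hb a (by simp))) ?_
          rw [← sum_insert (by simp), Iio_insert]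
          exact hd a
      _ = c a * d a + c a * ∑ i ∈ Iio a, d i := mul_add _ _ _
      _ ≤ c a * d a + ∑ i ∈ Iio a, c i * d i := by gcongr

theorem sum_mul_nonneg_of_monotone [Fintype α] {c d : α → R} (hc : Monotone c)
    (hd : ∀ j, ∑ i ∈ Iic j, d i ≤ 0) (hsum : ∑ i, d i = 0) : 0 ≤ ∑ i, c i * d i := by
  cases isEmpty_or_nonempty α
  · simp
  · obtain ⟨b, hb⟩ := Finite.exists_max (id : α → α)
    simpa [hsum] using mul_sum_le_sum_mul_of_isLowerSet hc hd (s := univ)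
      (by simpa using isLowerSet_univ) fun i _ => hb i

theorem sum_mul_greedyVector_le [Fintype α] {f : Finset α → R} (hf0 : f ∅ = 0)
    {c : α → R} (hc : Monotone c) {x : α → R} (hx : x ∈ basePolyhedron f) :
    ∑ i, c i * greedyVector f i ≤ ∑ i, c i * x i := by
  have hd : ∀ j, ∑ i ∈ Iic j, (x i - greedyVector f i) ≤ 0 := fun j => by
    rw [sum_sub_distrib, sum_greedyVector_of_isLowerSet f (by simpa using isLowerSet_Iic j), hf0,
      sub_zero]
    exact sub_nonpos.2 (hx.1 _)
  have hsum : ∑ i, (x i - greedyVector f i) = 0 := by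
    rw [sum_sub_distrib, sum_greedyVector_of_isLowerSet f (by simpa using isLowerSet_univ), hf0,
      sub_zero, hx.2, sub_self]
  simpa only [mul_sub, sum_sub_distrib, sub_nonneg] using sum_mul_nonneg_of_monotone hc hd hsum

end Optimality

theorem edmonds_greedy_general (n : ℕ)
    (f : Finset (Fin n) → ℝ) (hf0 : f ∅ = 0)
    (hsub : ∀ S T : Finset (Fin n), f (S ∪ T) + f (S ∩ T) ≤ f S + f T)
    (c : Fin n → ℝ) (hc : Monotone c)
    (q : Fin n → ℝ) (hq : ∀ i, q i = f (Finset.Iic i) - f (Finset.Iio i)) :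
    ((∀ A : Finset (Fin n), ∑ i ∈ A, q i ≤ f A) ∧ (∑ i, q i = f Finset.univ)) ∧
    IsLeast {v : ℝ | ∃ x : Fin n → ℝ,
        ((∀ A : Finset (Fin n), ∑ i ∈ A, x i ≤ f A) ∧ (∑ i, x i = f Finset.univ)) ∧
        v = ∑ i, c i * x i}
      (∑ i, c i * q i) := by
  obtain rfl : q = greedyVector f := funext hq
  have hmem : greedyVector f ∈ basePolyhedron f := greedyVector_mem_basePolyhedron hsub hf0
  refine ⟨hmem, ⟨_, hmem, rfl⟩, ?_⟩
  rintro _ ⟨x, hx, rfl⟩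
  exact sum_mul_greedyVector_le hf0 hc hx

/-- **Edmonds' greedy algorithm for linear optimization over the submodular base
polyhedron** (Lemma 5.4 of the paper): for a submodular `f` with `f(∅) = 0` and weights
`c₁ ≤ … ≤ cₙ`, the greedy vector `qᵢ = f({1,…,i}) - f({1,…,i-1})` lies in the base
polyhedron `B_f` and minimizes `⟨c,·⟩` over `B_f`. -/
theorem edmonds_greedy (n : ℕ) (hn : 0 < n)
    (f : Finset (Fin n) → ℝ) (hf0 : f ∅ = 0)
    (hsub : ∀ S T : Finset (Fin n), f (S ∪ T) + f (S ∩ T) ≤ f S + f T)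
    (c : Fin n → ℝ) (hc : Monotone c)
    (q : Fin n → ℝ) (hq : ∀ i, q i = f (Finset.Iic i) - f (Finset.Iio i)) :
    ((∀ A : Finset (Fin n), ∑ i ∈ A, q i ≤ f A) ∧ (∑ i, q i = f Finset.univ)) ∧
    IsLeast {v : ℝ | ∃ x : Fin n → ℝ,
        ((∀ A : Finset (Fin n), ∑ i ∈ A, x i ≤ f A) ∧ (∑ i, x i = f Finset.univ)) ∧
        v = ∑ i, c i * x i}
      (∑ i, c i * q i) :=
  edmonds_greedy_general n f hf0 hsub c hc q hq
end
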